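/- arXiv:2110.09906 — 4 statements merged into one kernel-verified Lean document; each statement's English description precedes it below -/
import Mathlib

section
/- Let n be a positive integer, r an arbitrary integer, and 0 ≤ k ≤ n-1. Then in ℚ(q), [n+k choose k]_q^{2r} · [n-1 choose k]_q^{2r} ≡ q^{2rnk - rk(k+1)} · (1 − (2r(1-q^n)^2/q^n) · ∑_{j=1}^{k} q^j/(1-q^j)^2) (mod Φ_n(q)^4). -/
open Finset Polynomial

/-- The variable `q` of the field of rational functions `ℚ(q)`. -/
noncomputable def q : RatFunc ℚ := RatFunc.X

/-- The `q`-shifted factorial `(q;q)_m = ∏_{i=1}^{m} (1 - q^i)` as an element of `ℚ(q)`. -/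
noncomputable def qPoch (m : ℕ) : RatFunc ℚ := ∏ i ∈ Finset.range m, (1 - q ^ (i + 1))

/-- The Gaussian `q`-binomial coefficient `[m choose k]_q`, viewed in `ℚ(q)`. -/
noncomputable def qbinom (m k : ℕ) : RatFunc ℚ :=
  if k ≤ m then qPoch m / (qPoch k * qPoch (m - k)) else 0

/-- The `q`-integer `[n] = 1 + q + ⋯ + q^{n-1}` as a polynomial in `ℚ[q]`. -/
noncomputable def qint (n : ℕ) : Polynomial ℚ := ∑ i ∈ Finset.range n, Polynomial.X ^ i

/-- The `q`-integer `[n]` viewed in `ℚ(q)`. -/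
noncomputable def qintR (n : ℕ) : RatFunc ℚ :=
  algebraMap (Polynomial ℚ) (RatFunc ℚ) (qint n)

/-- `A ≡ B (mod P)` for rational functions `A, B ∈ ℚ(q)` and a polynomial `P`:
`A - B` can be written as a fraction `a / b` of polynomials whose numerator `a` is
divisible by `P` and whose denominator `b` is coprime to `P`. -/
def ratModEq (P : Polynomial ℚ) (A B : RatFunc ℚ) : Prop :=
  ∃ a b : Polynomial ℚ, IsCoprime b P ∧ P ∣ a ∧
    A - B = algebraMap (Polynomial ℚ) (RatFunc ℚ) a / algebraMap (Polynomial ℚ) (RatFunc ℚ) b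

namespace QAux

noncomputable abbrev AM : Polynomial ℚ →+* RatFunc ℚ := algebraMap (Polynomial ℚ) (RatFunc ℚ)

lemma AM_inj : Function.Injective (AM : Polynomial ℚ →+* RatFunc ℚ) :=
  IsFractionRing.injective _ _

lemma q_pow (m : ℕ) : q ^ m = AM (X ^ m) := by
  rw [map_pow, RatFunc.algebraMap_X]; rfl

lemma q_ne_zero : (q : RatFunc ℚ) ≠ 0 := RatFunc.X_ne_zero

lemma AM_ne_zero {p : Polynomial ℚ} (hp : p ≠ 0) : AM p ≠ 0 := by
  simpa using fun h => hp (AM_inj (by simpa using h))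

lemma one_sub_X_pow_ne_zero {j : ℕ} (hj : 0 < j) : (1 - X ^ j : Polynomial ℚ) ≠ 0 := by
  intro h
  have := congrArg (Polynomial.eval 0) h
  simp [zero_pow hj.ne'] at this

lemma one_sub_q_pow_eq (j : ℕ) : 1 - q ^ j = AM (1 - X ^ j) := by
  rw [map_sub, map_one, q_pow]

lemma one_sub_q_pow_ne_zero {j : ℕ} (hj : 0 < j) : (1 - q ^ j : RatFunc ℚ) ≠ 0 := by
  rw [one_sub_q_pow_eq]
  exact AM_ne_zero (one_sub_X_pow_ne_zero hj)

lemma qPoch_ne_zero (m : ℕ) : qPoch m ≠ 0 :=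
  Finset.prod_ne_zero_iff.mpr fun i _ => one_sub_q_pow_ne_zero i.succ_pos

/-- local integrality at the prime `Φ_n` -/
def Loc (n : ℕ) (A : RatFunc ℚ) : Prop :=
  ∃ a b : Polynomial ℚ, IsCoprime b (cyclotomic n ℚ) ∧ A = AM a / AM b

variable {n : ℕ}

lemma phi_irr (hn : 0 < n) : Irreducible (cyclotomic n ℚ) := cyclotomic.irreducible_rat hn

lemma coprime_ne_zero (hn : 0 < n) {b : Polynomial ℚ} (hb : IsCoprime b (cyclotomic n ℚ)) :
    b ≠ 0 := by
  rintro rfl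
  exact (phi_irr hn).not_isUnit (isCoprime_zero_left.mp hb)

lemma coprime_of_not_dvd (hn : 0 < n) {b : Polynomial ℚ} (h : ¬ cyclotomic n ℚ ∣ b) :
    IsCoprime b (cyclotomic n ℚ) :=
  (((phi_irr hn).coprime_iff_not_dvd).mpr h).symm

lemma phi_coeff_zero_ne (hn : 0 < n) : (cyclotomic n ℚ).coeff 0 ≠ 0 := by
  by_cases h : n = 1
  · subst h; simp [cyclotomic_one]
  · rw [cyclotomic_coeff_zero ℚ (by omega)]; norm_num

lemma coprime_X (hn : 0 < n) : IsCoprime (X : Polynomial ℚ) (cyclotomic n ℚ) := by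
  apply coprime_of_not_dvd hn
  intro hdvd
  obtain ⟨c, hc⟩ := hdvd
  rcases (Polynomial.irreducible_X (R := ℚ)).isUnit_or_isUnit hc with h | h
  · exact (phi_irr hn).not_isUnit h
  · obtain ⟨u, rfl⟩ := h
    have : (X : Polynomial ℚ) ∣ cyclotomic n ℚ := by
      refine ⟨(u⁻¹ : (Polynomial ℚ)ˣ), ?_⟩
      rw [hc, mul_assoc]
      simp
    exact phi_coeff_zero_ne hn (Polynomial.X_dvd_iff.mp this)

lemma coprime_one_sub_X_pow (hn : 0 < n) {j : ℕ} (hj1 : 0 < j) (hjn : j < n) :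
    IsCoprime (1 - X ^ j : Polynomial ℚ) (cyclotomic n ℚ) := by
  apply coprime_of_not_dvd hn
  intro hdvd
  have hdvd' : cyclotomic n ℚ ∣ (X ^ j - 1 : Polynomial ℚ) := by
    have := hdvd.neg_right
    simpa using this
  rw [← prod_cyclotomic_eq_X_pow_sub_one hj1 ℚ] at hdvd'
  obtain ⟨d, hd, hdvd''⟩ := (phi_irr hn).prime.exists_mem_finset_dvd hdvd'
  have hd0 : 0 < d := Nat.pos_of_mem_divisors hd
  have : cyclotomic n ℚ = cyclotomic d ℚ :=
    eq_of_monic_of_associated (cyclotomic.monic n ℚ) (cyclotomic.monic d ℚ)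
      ((phi_irr hn).associated_of_dvd (cyclotomic.irreducible_rat hd0) hdvd'')
  have hnd : n = d := cyclotomic_injective this
  have : d ≤ j := Nat.le_of_dvd hj1 (Nat.dvd_of_mem_divisors hd)
  omega

namespace Loc

lemma poly (p : Polynomial ℚ) : Loc n (AM p) := ⟨p, 1, isCoprime_one_left, by simp⟩

lemma zero : Loc n 0 := by simpa using poly 0

lemma one : Loc n 1 := by simpa using poly 1

lemma intCast (m : ℤ) : Loc n ((m : RatFunc ℚ)) := by
  have := poly (n := n) ((m : Polynomial ℚ))
  rwa [map_intCast] at this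

lemma natCast (m : ℕ) : Loc n ((m : RatFunc ℚ)) := by
  have := poly (n := n) ((m : Polynomial ℚ))
  rwa [map_natCast] at this

lemma add (hn : 0 < n) {A B : RatFunc ℚ} (hA : Loc n A) (hB : Loc n B) : Loc n (A + B) := by
  obtain ⟨a1, b1, h1, rfl⟩ := hA
  obtain ⟨a2, b2, h2, rfl⟩ := hB
  have hb1 : AM b1 ≠ 0 := AM_ne_zero (coprime_ne_zero hn h1)
  have hb2 : AM b2 ≠ 0 := AM_ne_zero (coprime_ne_zero hn h2)
  refine ⟨a1 * b2 + a2 * b1, b1 * b2, h1.mul_left h2, ?_⟩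
  rw [div_add_div _ _ hb1 hb2, map_add, map_mul, map_mul, map_mul]; ring_nf

lemma mul (hn : 0 < n) {A B : RatFunc ℚ} (hA : Loc n A) (hB : Loc n B) : Loc n (A * B) := by
  obtain ⟨a1, b1, h1, rfl⟩ := hA
  obtain ⟨a2, b2, h2, rfl⟩ := hB
  refine ⟨a1 * a2, b1 * b2, h1.mul_left h2, ?_⟩
  rw [div_mul_div_comm, map_mul, map_mul]

lemma neg {A : RatFunc ℚ} (hA : Loc n A) : Loc n (-A) := by
  obtain ⟨a, b, h, rfl⟩ := hA
  exact ⟨-a, b, h, by rw [map_neg, neg_div]⟩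

lemma sub (hn : 0 < n) {A B : RatFunc ℚ} (hA : Loc n A) (hB : Loc n B) : Loc n (A - B) := by
  rw [sub_eq_add_neg]; exact hA.add hn hB.neg

lemma sum (hn : 0 < n) {ι : Type*} (s : Finset ι) (f : ι → RatFunc ℚ)
    (h : ∀ i ∈ s, Loc n (f i)) : Loc n (∑ i ∈ s, f i) := by
  classical
  induction s using Finset.induction with
  | empty => simpa using zero
  | insert _ _ ha ih =>
    rw [Finset.sum_insert ha]
    exact (h _ (Finset.mem_insert_self _ _)).add hn
      (ih fun i hi => h i (Finset.mem_insert_of_mem hi))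

end Loc
end QAux
namespace QAux
variable {n : ℕ}

lemma Loc.of_eq {A B : RatFunc ℚ} (h : Loc n A) (e : A = B) : Loc n B := e ▸ h

lemma Loc.pow (hn : 0 < n) {A : RatFunc ℚ} (hA : Loc n A) (m : ℕ) : Loc n (A ^ m) := by
  induction m with
  | zero => simpa using Loc.one
  | succ i ih => rw [pow_succ]; exact ih.mul hn hA

lemma one_sub_phi_mul (hn : 0 < n) {B : RatFunc ℚ} (hB : Loc n B) :
    (1 - AM (cyclotomic n ℚ) * B) ≠ 0 ∧ Loc n (1 - AM (cyclotomic n ℚ) * B)⁻¹ := by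
  obtain ⟨a, b, hcop, rfl⟩ := hB
  have hb : AM b ≠ 0 := AM_ne_zero (coprime_ne_zero hn hcop)
  have hd : IsCoprime (b - cyclotomic n ℚ * a) (cyclotomic n ℚ) := by
    have := hcop.add_mul_left_left (-a)
    rwa [mul_neg, ← sub_eq_add_neg] at this
  have hdne : AM (b - cyclotomic n ℚ * a) ≠ 0 := AM_ne_zero (coprime_ne_zero hn hd)
  have key : 1 - AM (cyclotomic n ℚ) * (AM a / AM b)
      = AM (b - cyclotomic n ℚ * a) / AM b := by
    rw [map_sub, map_mul]
    field_simp
  constructor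
  · rw [key]; exact div_ne_zero hdne hb
  · rw [key, inv_div]; exact ⟨b, _, hd, rfl⟩

lemma zpow_one_sub (hn : 0 < n) {u : RatFunc ℚ} (hu : Loc n u) (e : ℤ) :
    ∃ w, Loc n w ∧ (1 - AM (cyclotomic n ℚ) ^ 2 * u) ^ e
      = 1 - (e : RatFunc ℚ) * (AM (cyclotomic n ℚ) ^ 2 * u)
        + AM (cyclotomic n ℚ) ^ 4 * w := by
  set φ : RatFunc ℚ := AM (cyclotomic n ℚ) with hφdef
  have hφ : Loc n φ := Loc.poly _
  have hφ2 : Loc n (φ ^ 2) := hφ.pow hn 2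
  have hφ4 : Loc n (φ ^ 4) := hφ.pow hn 4
  have hu2 : Loc n (u ^ 2) := hu.pow hn 2
  have hc : Loc n (φ ^ 2 * u) := hφ2.mul hn hu
  have hφu : Loc n (φ * u) := hφ.mul hn hu
  have hrw : φ ^ 2 * u = φ * (φ * u) := by ring
  have h0 : (1 - φ ^ 2 * u) ≠ 0 := by
    rw [hrw]; exact (one_sub_phi_mul hn hφu).1
  have hinvLoc : Loc n (1 - φ ^ 2 * u)⁻¹ := by
    rw [hrw]; exact (one_sub_phi_mul hn hφu).2
  have hinv : (1 - φ ^ 2 * u)⁻¹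
      = 1 + φ ^ 2 * u + φ ^ 4 * (u ^ 2 * (1 - φ ^ 2 * u)⁻¹) := by
    field_simp
    ring
  induction e using Int.induction_on with
  | zero => exact ⟨0, Loc.zero, by simp⟩
  | succ i ih =>
    obtain ⟨w, hw, hwe⟩ := ih
    refine ⟨(i : RatFunc ℚ) * u ^ 2 + w * (1 - φ ^ 2 * u), ?_, ?_⟩
    · exact ((Loc.natCast i).mul hn hu2).add hn (hw.mul hn (Loc.one.sub hn hc))
    · rw [zpow_add_one₀ h0, hwe]
      push_cast
      ring
  | pred i ih =>
    obtain ⟨w, hw, hwe⟩ := ih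
    set t : RatFunc ℚ := u ^ 2 * (1 - φ ^ 2 * u)⁻¹ with ht
    have htLoc : Loc n t := Loc.of_eq (hu2.mul hn hinvLoc) ht.symm
    refine ⟨t + (i : RatFunc ℚ) * u ^ 2 + (i : RatFunc ℚ) * (φ ^ 2 * u) * t
        + w + w * (φ ^ 2 * u) + φ ^ 4 * w * t, ?_, ?_⟩
    · have l1 : Loc n ((i : RatFunc ℚ) * u ^ 2) := (Loc.natCast i).mul hn hu2
      have l2 : Loc n ((i : RatFunc ℚ) * (φ ^ 2 * u) * t) :=
        ((Loc.natCast i).mul hn hc).mul hn htLoc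
      have l3 : Loc n (w * (φ ^ 2 * u)) := hw.mul hn hc
      have l4 : Loc n (φ ^ 4 * w * t) := (hφ4.mul hn hw).mul hn htLoc
      exact ((((htLoc.add hn l1).add hn l2).add hn hw).add hn l3).add hn l4
    · rw [show (-(i:ℤ) - 1) = (-(i:ℤ)) - 1 by ring, zpow_sub_one₀ h0, hwe, hinv]
      push_cast
      ring

lemma prod_one_sub_zpow (hn : 0 < n) (e : ℤ) (s : Finset ℕ) (c : ℕ → RatFunc ℚ)
    (h : ∀ i ∈ s, ∃ u, Loc n u ∧ c i = AM (cyclotomic n ℚ) ^ 2 * u) :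
    ∃ v w, Loc n v ∧ Loc n w ∧ (∑ i ∈ s, c i) = AM (cyclotomic n ℚ) ^ 2 * v ∧
      (∏ i ∈ s, (1 - c i)) ^ e
        = 1 - (e : RatFunc ℚ) * (∑ i ∈ s, c i) + AM (cyclotomic n ℚ) ^ 4 * w := by
  classical
  set φ : RatFunc ℚ := AM (cyclotomic n ℚ) with hφdef
  have hφ : Loc n φ := Loc.poly _
  induction s using Finset.induction with
  | empty => exact ⟨0, 0, Loc.zero, Loc.zero, by simp, by simp⟩
  | @insert a s ha ih =>
    obtain ⟨v, w, hv, hw, hsum, hprod⟩ := ih fun i hi => h i (Finset.mem_insert_of_mem hi)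
    obtain ⟨ua, hua, hca⟩ := h a (Finset.mem_insert_self a s)
    obtain ⟨wa, hwa, hwae⟩ := zpow_one_sub hn hua e
    refine ⟨ua + v,
      (e : RatFunc ℚ) ^ 2 * ua * v + wa * (1 - (e : RatFunc ℚ) * (φ ^ 2 * v))
        + w * (1 - (e : RatFunc ℚ) * (φ ^ 2 * ua)) + φ ^ 4 * wa * w, ?_, ?_, ?_, ?_⟩
    · exact hua.add hn hv
    · have he : Loc n ((e : RatFunc ℚ)) := Loc.intCast e
      have he2 : Loc n ((e : RatFunc ℚ) ^ 2) := he.pow hn 2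
      have hφ2 : Loc n (φ ^ 2) := hφ.pow hn 2
      have hφ4 : Loc n (φ ^ 4) := hφ.pow hn 4
      exact ((((he2.mul hn hua).mul hn hv).add hn
        (hwa.mul hn (Loc.one.sub hn (he.mul hn (hφ2.mul hn hv))))).add hn
        (hw.mul hn (Loc.one.sub hn (he.mul hn (hφ2.mul hn hua))))).add hn
        ((hφ4.mul hn hwa).mul hn hw)
    · rw [Finset.sum_insert ha, hca, hsum]; ring
    · rw [Finset.prod_insert ha, Finset.sum_insert ha, mul_zpow, hca, hwae, hprod, hsum]
      ring

lemma loc_q_zpow (hn : 0 < n) (e : ℤ) : Loc n (q ^ e) := by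
  rcases e with m | m
  · show Loc n (q ^ (m : ℤ))
    rw [zpow_natCast, q_pow]
    exact Loc.poly _
  · rw [zpow_negSucc, q_pow]
    refine ⟨1, X ^ (m + 1), (coprime_X hn).pow_left, ?_⟩
    rw [map_one, one_div]

lemma ratModEq_of (hn : 0 < n) (A B C : RatFunc ℚ) (hC : Loc n C)
    (hAB : A - B = AM ((cyclotomic n ℚ) ^ 4) * C) :
    ratModEq ((cyclotomic n ℚ) ^ 4) A B := by
  obtain ⟨a, b, hcop, rfl⟩ := hC
  refine ⟨(cyclotomic n ℚ) ^ 4 * a, b, hcop.pow_right, dvd_mul_right _ _, ?_⟩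
  rw [hAB, map_mul, mul_div_assoc]

end QAux

namespace QAux

lemma AM_X : AM (X : Polynomial ℚ) = q := by rw [RatFunc.algebraMap_X]; rfl

lemma gauss (k : ℕ) : 2 * (∑ i ∈ Finset.range k, (i : ℤ)) = k * (k - 1) := by
  induction k with
  | zero => simp
  | succ m ih => rw [Finset.sum_range_succ, mul_add, ih]; push_cast; ring

lemma exp_eq (n k : ℕ) (r : ℤ) (hkn : k < n) :
    ((∑ i ∈ Finset.range k, (n - (i + 1)) : ℕ) : ℤ) * (2 * r)
      = 2 * r * (n : ℤ) * (k : ℤ) - r * (k : ℤ) * ((k : ℤ) + 1) := by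
  have hcast : ((∑ i ∈ Finset.range k, (n - (i + 1)) : ℕ) : ℤ)
      = ∑ i ∈ Finset.range k, ((n : ℤ) - ((i : ℤ) + 1)) := by
    rw [Nat.cast_sum]
    refine Finset.sum_congr rfl fun i hi => ?_
    have : i + 1 ≤ n := by
      have := Finset.mem_range.mp hi; omega
    push_cast [Nat.cast_sub this]
    ring
  have hsum : ∑ i ∈ Finset.range k, ((n : ℤ) - ((i : ℤ) + 1))
      = (k : ℤ) * n - (∑ i ∈ Finset.range k, (i : ℤ)) - k := by
    rw [Finset.sum_sub_distrib, Finset.sum_add_distrib, Finset.sum_const, Finset.sum_const,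
      Finset.card_range]
    push_cast
    ring
  have hg := gauss k
  rw [hcast, hsum]
  linear_combination (-r) * hg

lemma qbinom_mul {n k : ℕ} (hn : 0 < n) (hk : k ≤ n - 1) :
    qbinom (n + k) k * qbinom (n - 1) k
      = ∏ i ∈ Finset.range k,
          ((1 - q ^ (n + i + 1)) * (1 - q ^ (n - (i + 1))) / (1 - q ^ (i + 1)) ^ 2) := by
  have h1 : qPoch (n + k) = qPoch n * ∏ i ∈ Finset.range k, (1 - q ^ (n + i + 1)) := by
    unfold qPoch
    rw [Finset.prod_range_add]
  have h2 : qPoch (n - 1) = qPoch (n - 1 - k) * ∏ i ∈ Finset.range k, (1 - q ^ (n - (i + 1))) := by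
    unfold qPoch
    rw [show n - 1 = (n - 1 - k) + k by omega, Finset.prod_range_add]
    congr 1
    · rw [show (n - 1 - k) + k - k = n - 1 - k by omega]
    · rw [← Finset.prod_range_reflect (fun i => 1 - q ^ (n - (i + 1))) k]
      refine Finset.prod_congr rfl fun j hj => ?_
      have hj' : j < k := Finset.mem_range.mp hj
      congr 2
      omega
  rw [qbinom, qbinom, if_pos (Nat.le_add_left k n), if_pos hk, h1, h2,
    show n + k - k = n by omega]
  rw [Finset.prod_div_distrib, Finset.prod_mul_distrib, Finset.prod_pow]
  have e1 : qPoch n ≠ 0 := qPoch_ne_zero n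
  have e2 : qPoch k ≠ 0 := qPoch_ne_zero k
  have e3 : qPoch (n - 1 - k) ≠ 0 := qPoch_ne_zero (n - 1 - k)
  have e4 : qPoch k = ∏ i ∈ Finset.range k, (1 - q ^ (i + 1)) := rfl
  rw [← e4]
  field_simp

end QAux

open QAux in
/-- Equation (2.2): for a positive integer `n`, an arbitrary integer `r` and `0 ≤ k ≤ n-1`,
`[n+k choose k]^{2r} [n-1 choose k]^{2r} ≡ q^{2rnk - rk(k+1)}
  (1 - (2r(1-q^n)²/q^n) ∑_{j=1}^k q^j/(1-q^j)²)  (mod Φ_n(q)⁴)`. -/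
theorem qbinom_prod_pow_mod_cyclotomic_pow_four (n k : ℕ) (hn : 0 < n) (hk : k ≤ n - 1)
    (r : ℤ) :
    ratModEq ((Polynomial.cyclotomic n ℚ) ^ 4)
      (qbinom (n + k) k ^ (2 * r) * qbinom (n - 1) k ^ (2 * r))
      (q ^ (2 * r * (n : ℤ) * (k : ℤ) - r * (k : ℤ) * ((k : ℤ) + 1)) *
        (1 - RatFunc.C ((2 * r : ℤ) : ℚ) * (1 - q ^ n) ^ 2 / q ^ n *
          ∑ j ∈ Finset.Icc 1 k, q ^ j / (1 - q ^ j) ^ 2)) := by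
  classical
  set φ : RatFunc ℚ := AM (cyclotomic n ℚ) with hφdef
  obtain ⟨h, hh⟩ := cyclotomic.dvd_X_pow_sub_one n ℚ
  set c : ℕ → RatFunc ℚ := fun i =>
    (1 - q ^ n) ^ 2 / (q ^ (n - (i + 1)) * (1 - q ^ (i + 1)) ^ 2) with hcdef
  have hci : ∀ i : ℕ, c i = (1 - q ^ n) ^ 2 / (q ^ (n - (i + 1)) * (1 - q ^ (i + 1)) ^ 2) :=
    fun _ => rfl
  have hcLoc : ∀ i ∈ Finset.range k, ∃ u, Loc n u ∧ c i = φ ^ 2 * u := by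
    intro i hi
    have hik : i < k := Finset.mem_range.mp hi
    have hi1 : 0 < i + 1 := Nat.succ_pos i
    have hin : i + 1 < n := by omega
    refine ⟨AM (h * h) / AM (X ^ (n - (i + 1)) * (1 - X ^ (i + 1)) ^ 2),
      ⟨h * h, _, ((coprime_X hn).pow_left).mul_left
        ((coprime_one_sub_X_pow hn hi1 hin).pow_left), rfl⟩, ?_⟩
    have hnum : (1 - q ^ n) = -(φ * AM h) := by
      rw [one_sub_q_pow_eq, hφdef, ← map_mul, ← hh,
        show (1 - X ^ n : Polynomial ℚ) = -(X ^ n - 1) by ring, map_neg]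
    have hden : q ^ (n - (i + 1)) * (1 - q ^ (i + 1)) ^ 2
        = AM (X ^ (n - (i + 1)) * (1 - X ^ (i + 1)) ^ 2) := by
      rw [map_mul, map_pow, map_pow, AM_X, ← one_sub_q_pow_eq]
    rw [hci i, hnum, hden, neg_sq, mul_pow, sq (AM h), ← map_mul, mul_div_assoc]
  obtain ⟨v, w, hv, hw, hsum, hprod⟩ := prod_one_sub_zpow hn (2 * r) (Finset.range k) c hcLoc
  have hfac : ∀ i ∈ Finset.range k,
      (1 - q ^ (n + i + 1)) * (1 - q ^ (n - (i + 1))) / (1 - q ^ (i + 1)) ^ 2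
        = (-q ^ (n - (i + 1))) * (1 - c i) := by
    intro i hi
    have hik : i < k := Finset.mem_range.mp hi
    rw [hci i]
    obtain ⟨m, hm⟩ : ∃ m, n = (i + 1) + m := ⟨n - (i + 1), by omega⟩
    subst hm
    rw [show (i + 1) + m + i + 1 = (i + 1) + ((i + 1) + m) by ring,
      show (i + 1) + m - (i + 1) = m by omega]
    have hx : (1 - q ^ (i + 1)) ≠ 0 := one_sub_q_pow_ne_zero (Nat.succ_pos i)
    have hq0 : (q : RatFunc ℚ) ^ m ≠ 0 := pow_ne_zero m q_ne_zero
    rw [pow_add q (i + 1) ((i + 1) + m), pow_add q (i + 1) m]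
    field_simp
    ring
  have hstep1 : qbinom (n + k) k ^ (2 * r) * qbinom (n - 1) k ^ (2 * r)
      = ((∏ i ∈ Finset.range k, (-q ^ (n - (i + 1))))
          * ∏ i ∈ Finset.range k, (1 - c i)) ^ (2 * r) := by
    rw [← mul_zpow, qbinom_mul hn hk, Finset.prod_congr rfl hfac, Finset.prod_mul_distrib]
  have hsign : ∏ i ∈ Finset.range k, (-q ^ (n - (i + 1)))
      = (-1 : RatFunc ℚ) ^ k * q ^ (∑ i ∈ Finset.range k, (n - (i + 1))) := by
    calc ∏ i ∈ Finset.range k, (-q ^ (n - (i + 1)))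
        = ∏ i ∈ Finset.range k, ((-1) * q ^ (n - (i + 1))) :=
          Finset.prod_congr rfl fun i _ => by ring
      _ = (∏ _i ∈ Finset.range k, (-1 : RatFunc ℚ))
            * ∏ i ∈ Finset.range k, q ^ (n - (i + 1)) := Finset.prod_mul_distrib
      _ = _ := by
          rw [Finset.prod_const, Finset.card_range, Finset.prod_pow_eq_pow_sum]
  set S : ℕ := ∑ i ∈ Finset.range k, (n - (i + 1)) with hS
  set E : ℤ := 2 * r * (n : ℤ) * (k : ℤ) - r * (k : ℤ) * ((k : ℤ) + 1) with hE
  have hs1 : ((-1 : RatFunc ℚ) ^ k) ^ (2 * r : ℤ) = 1 := by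
    rw [zpow_mul, zpow_two]
    rw [← pow_add]
    rw [Even.neg_one_pow ⟨k, rfl⟩, one_zpow]
  have hs2 : (q ^ S) ^ (2 * r : ℤ) = q ^ E := by
    rw [← zpow_natCast q S, ← zpow_mul, hS, hE]
    congr 1
    exact exp_eq n k r (by omega)
  have hpow : (((-1 : RatFunc ℚ) ^ k * q ^ S) * ∏ i ∈ Finset.range k, (1 - c i)) ^ (2 * r : ℤ)
      = q ^ E * (1 - ((2 * r : ℤ) : RatFunc ℚ) * (∑ i ∈ Finset.range k, c i) + φ ^ 4 * w) := by
    rw [mul_zpow, mul_zpow, hs1, hs2, hprod, one_mul]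
  have hsumIcc : RatFunc.C ((2 * r : ℤ) : ℚ) * (1 - q ^ n) ^ 2 / q ^ n *
        ∑ j ∈ Finset.Icc 1 k, q ^ j / (1 - q ^ j) ^ 2
      = ((2 * r : ℤ) : RatFunc ℚ) * ∑ i ∈ Finset.range k, c i := by
    rw [map_intCast]
    have hIcc : ∑ j ∈ Finset.Icc 1 k, q ^ j / (1 - q ^ j) ^ 2
        = ∑ i ∈ Finset.range k, q ^ (i + 1) / (1 - q ^ (i + 1)) ^ 2 := by
      rw [← Finset.Ico_add_one_right_eq_Icc, Finset.sum_Ico_eq_sum_range,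
        show k + 1 - 1 = k by omega]
      exact Finset.sum_congr rfl fun i _ => by rw [Nat.add_comm 1 i]
    rw [hIcc, Finset.mul_sum, Finset.mul_sum]
    refine Finset.sum_congr rfl fun i hi => ?_
    have hik : i < k := Finset.mem_range.mp hi
    rw [hci i]
    have hsplit : (q : RatFunc ℚ) ^ n = q ^ (n - (i + 1)) * q ^ (i + 1) := by
      rw [← pow_add]; congr 1; omega
    have hx : (1 - q ^ (i + 1)) ≠ 0 := one_sub_q_pow_ne_zero (Nat.succ_pos i)
    have hq0 : (q : RatFunc ℚ) ≠ 0 := q_ne_zero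
    rw [hsplit]
    field_simp
  have hdiff : (qbinom (n + k) k ^ (2 * r) * qbinom (n - 1) k ^ (2 * r))
      - (q ^ E * (1 - RatFunc.C ((2 * r : ℤ) : ℚ) * (1 - q ^ n) ^ 2 / q ^ n *
          ∑ j ∈ Finset.Icc 1 k, q ^ j / (1 - q ^ j) ^ 2))
      = AM ((cyclotomic n ℚ) ^ 4) * (q ^ E * w) := by
    rw [hstep1, hsign, hpow, hsumIcc, map_pow, ← hφdef]
    ring
  exact ratModEq_of hn _ _ _ ((loc_q_zpow hn E).mul hn hw) hdiff
end

section
/- Let n be a positive integer and r an arbitrary integer. Then in ℚ(q), ∑_{k=0}^{n-1} q^{r(n-k)^2+(r-1)k} · [n+k choose k]_q^{2r} · [n-1 choose k]_q^{2r} ≡ q^{n^2 r} · ∑_{k=0}^{n-1} q^{-k} − 2r · q^{n(nr-1)} · (1-q^n)^2 · ∑_{k=0}^{n-1} q^{-k} ∑_{j=1}^{k} q^j/(1-q^j)^2 (mod Φ_n(q)^4). -/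
open Finset Polynomial

namespace SRaux

noncomputable abbrev ι : Polynomial ℚ →+* RatFunc ℚ := algebraMap (Polynomial ℚ) (RatFunc ℚ)

/-- valuation-at-`cyclotomic n` at least `m` -/
def Dv (n m : ℕ) (f : RatFunc ℚ) : Prop :=
  ∃ a b : Polynomial ℚ, IsCoprime b (cyclotomic n ℚ) ∧ (cyclotomic n ℚ) ^ m ∣ a ∧
    f = ι a / ι b

variable {n : ℕ}

lemma phi_not_unit (hn : 0 < n) : ¬ IsUnit (cyclotomic n ℚ) := (cyclotomic.irreducible_rat hn).not_isUnit

lemma cop_ne_zero (hn : 0 < n) {b : Polynomial ℚ} (h : IsCoprime b (cyclotomic n ℚ)) : b ≠ 0 := by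
  rintro rfl
  exact phi_not_unit hn (isCoprime_zero_left.mp h)

lemma iota_ne_zero {b : Polynomial ℚ} (hb : b ≠ 0) : ι b ≠ 0 := by
  simpa using (RatFunc.algebraMap_ne_zero hb)

lemma Dv_zero (m : ℕ) : Dv n m 0 := ⟨0, 1, isCoprime_one_left, dvd_zero _, by simp⟩

lemma Dv_add (hn : 0 < n) {m f g} (hf : Dv n m f) (hg : Dv n m g) : Dv n m (f + g) := by
  obtain ⟨a, b, hb, ha, rfl⟩ := hf
  obtain ⟨c, d, hd, hc, rfl⟩ := hg
  refine ⟨a * d + c * b, b * d, hb.mul_left hd, dvd_add (ha.mul_right d) (hc.mul_right b), ?_⟩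
  rw [div_add_div _ _ (iota_ne_zero (cop_ne_zero hn hb)) (iota_ne_zero (cop_ne_zero hn hd))]
  push_cast [map_add, map_mul]
  ring

lemma Dv_neg {m f} (hf : Dv n m f) : Dv n m (-f) := by
  obtain ⟨a, b, hb, ha, rfl⟩ := hf
  exact ⟨-a, b, hb, ha.neg_right, by rw [map_neg, neg_div]⟩

lemma Dv_sub (hn : 0 < n) {m f g} (hf : Dv n m f) (hg : Dv n m g) : Dv n m (f - g) := by
  rw [sub_eq_add_neg]; exact Dv_add hn hf (Dv_neg hg)

lemma Dv_mul {m₁ m₂ f g} (hf : Dv n m₁ f) (hg : Dv n m₂ g) : Dv n (m₁ + m₂) (f * g) := by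
  obtain ⟨a, b, hb, ha, rfl⟩ := hf
  obtain ⟨c, d, hd, hc, rfl⟩ := hg
  exact ⟨a * c, b * d, hb.mul_left hd, by rw [pow_add]; exact mul_dvd_mul ha hc, by
    rw [map_mul, map_mul]; rw [div_mul_div_comm]⟩

lemma Dv_mono {m m' : ℕ} (h : m' ≤ m) {f} (hf : Dv n m f) : Dv n m' f := by
  obtain ⟨a, b, hb, ha, rfl⟩ := hf
  exact ⟨a, b, hb, (pow_dvd_pow _ h).trans ha, rfl⟩

lemma Dv_sum (hn : 0 < n) {m} {s : Finset ℕ} {f : ℕ → RatFunc ℚ} (h : ∀ i ∈ s, Dv n m (f i)) :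
    Dv n m (∑ i ∈ s, f i) := by
  classical
  induction s using Finset.induction_on with
  | empty => simpa using Dv_zero (n:=n) m
  | insert _ _ hx ih =>
      rw [Finset.sum_insert hx]
      exact Dv_add hn (h _ (Finset.mem_insert_self _ _))
        (ih fun i hi => h i (Finset.mem_insert_of_mem hi))

lemma Dv_intcast (m : ℤ) : Dv n 0 ((m : RatFunc ℚ)) :=
  ⟨(m : Polynomial ℚ), 1, isCoprime_one_left, one_dvd _, by push_cast; simp⟩

lemma Dv_one : Dv n 0 (1 : RatFunc ℚ) := ⟨1, 1, isCoprime_one_left, one_dvd _, by simp⟩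



lemma cop_X (hn : 0 < n) : IsCoprime (X : Polynomial ℚ) (cyclotomic n ℚ) := by
  rw [(Polynomial.prime_X).coprime_iff_not_dvd, Polynomial.X_dvd_iff]
  rcases eq_or_lt_of_le (show 1 ≤ n from hn) with h | h
  · rw [← h, cyclotomic_one]; simp
  · rw [cyclotomic_coeff_zero ℚ h]; norm_num

lemma cop_X_pow (hn : 0 < n) (j : ℕ) : IsCoprime ((X : Polynomial ℚ)^j) (cyclotomic n ℚ) :=
  (cop_X hn).pow_left

lemma cop_one_sub_X_pow (hn : 0 < n) {j : ℕ} (hj : 0 < j) (hjn : j < n) :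
    IsCoprime (1 - (X : Polynomial ℚ)^j) (cyclotomic n ℚ) := by
  have h1 : IsCoprime ((X : Polynomial ℚ)^j - 1) (cyclotomic n ℚ) := by
    rw [← prod_cyclotomic_eq_X_pow_sub_one hj ℚ]
    refine IsCoprime.prod_left fun e he => cyclotomic.isCoprime_rat ?_
    have := Nat.le_of_dvd hj (Nat.mem_divisors.mp he).1
    omega
  have : (1 - (X : Polynomial ℚ)^j) = -((X:Polynomial ℚ)^j - 1) := by ring
  rw [this]; exact h1.neg_left

end SRaux

namespace SRaux
variable {n : ℕ}

def Ugood (n : ℕ) (f : RatFunc ℚ) : Prop :=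
  ∃ a b : Polynomial ℚ, IsCoprime a (cyclotomic n ℚ) ∧ IsCoprime b (cyclotomic n ℚ) ∧
    f = ι a / ι b

lemma Ugood.dv0 {f} (h : Ugood n f) : Dv n 0 f := by
  obtain ⟨a, b, _, hb, rfl⟩ := h
  exact ⟨a, b, hb, by simp, rfl⟩

lemma Ugood_one : Ugood n 1 := ⟨1, 1, isCoprime_one_left, isCoprime_one_left, by simp⟩

lemma Ugood_mul {f g} (hf : Ugood n f) (hg : Ugood n g) : Ugood n (f * g) := by
  obtain ⟨a, b, ha, hb, rfl⟩ := hf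
  obtain ⟨c, d, hc, hd, rfl⟩ := hg
  exact ⟨a * c, b * d, ha.mul_left hc, hb.mul_left hd, by
    rw [map_mul, map_mul, div_mul_div_comm]⟩

lemma Ugood_inv {f} (hf : Ugood n f) : Ugood n f⁻¹ := by
  obtain ⟨a, b, ha, hb, rfl⟩ := hf
  exact ⟨b, a, hb, ha, by rw [inv_div]⟩

lemma Ugood_pow {f} (hf : Ugood n f) (k : ℕ) : Ugood n (f ^ k) := by
  induction k with
  | zero => simpa using Ugood_one
  | succ k ih => rw [pow_succ]; exact Ugood_mul ih hf

lemma Ugood_zpow {f} (hf : Ugood n f) (m : ℤ) : Ugood n (f ^ m) := by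
  obtain ⟨k, rfl | rfl⟩ := Int.eq_nat_or_neg m
  · rw [zpow_natCast]; exact Ugood_pow hf k
  · rw [zpow_neg, zpow_natCast]; exact Ugood_inv (Ugood_pow hf k)

lemma Ugood_prod {s : Finset ℕ} {f : ℕ → RatFunc ℚ} (h : ∀ i ∈ s, Ugood n (f i)) :
    Ugood n (∏ i ∈ s, f i) := by
  classical
  induction s using Finset.induction_on with
  | empty => simpa using Ugood_one
  | insert _ _ hx ih =>
      rw [Finset.prod_insert hx]
      exact Ugood_mul (h _ (Finset.mem_insert_self _ _))
        (ih fun i hi => h i (Finset.mem_insert_of_mem hi))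

lemma coprime_sub {a b : Polynomial ℚ} (hb : IsCoprime b (cyclotomic n ℚ))
    (ha : cyclotomic n ℚ ∣ a) : IsCoprime (b - a) (cyclotomic n ℚ) := by
  obtain ⟨c, rfl⟩ := ha
  obtain ⟨u, v, h⟩ := hb
  exact ⟨u, v + u * c, by linear_combination h⟩

lemma one_sub_rep (hn : 0 < n) {w : RatFunc ℚ} {a b : Polynomial ℚ}
    (hb : IsCoprime b (cyclotomic n ℚ)) (hw : w = ι a / ι b) :
    1 - w = ι (b - a) / ι b := by
  have hb0 := iota_ne_zero (cop_ne_zero hn hb)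
  rw [hw, map_sub, sub_div, div_self hb0]

lemma one_sub_zpow_cong (hn : 0 < n) {w : RatFunc ℚ} {a b : Polynomial ℚ}
    (hb : IsCoprime b (cyclotomic n ℚ)) (ha : (cyclotomic n ℚ) ^ 2 ∣ a)
    (hw : w = ι a / ι b) (m : ℤ) :
    Dv n 4 ((1 - w) ^ m - (1 - (m : RatFunc ℚ) * w)) := by
  have hphi_dvd : cyclotomic n ℚ ∣ a := (dvd_pow_self _ (by norm_num)).trans ha
  have hab : IsCoprime (b - a) (cyclotomic n ℚ) := coprime_sub hb hphi_dvd
  have h1w : 1 - w = ι (b - a) / ι b := one_sub_rep hn hb hw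
  have hne : (1 - w) ≠ 0 := by
    rw [h1w]
    exact div_ne_zero (iota_ne_zero (cop_ne_zero hn hab)) (iota_ne_zero (cop_ne_zero hn hb))
  have hDw : Dv n 2 w := ⟨a, b, hb, ha, hw⟩
  have hDinv : Dv n 0 (1 - w)⁻¹ := ⟨b, b - a, hab, by simp, by rw [h1w, inv_div]⟩
  have hU : Ugood n (1 - w) := ⟨b - a, b, hab, hb, h1w⟩
  induction m using Int.induction_on with
  | zero => simpa using Dv_zero 4
  | succ i ih =>
      have key : (1 - w) ^ ((i : ℤ) + 1) - (1 - (((i : ℤ) + 1 : ℤ) : RatFunc ℚ) * w) =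
          ((1 - w) ^ (i : ℤ) - (1 - ((i : ℤ) : RatFunc ℚ) * w)) * (1 - w) +
            ((i : ℤ) : RatFunc ℚ) * (w * w) := by
        rw [zpow_add_one₀ hne]; push_cast; ring
      rw [key]
      exact Dv_add hn (Dv_mul (m₁ := 4) (m₂ := 0) ih hU.dv0)
        (Dv_mul (m₁ := 0) (m₂ := 4) (Dv_intcast (i : ℤ)) (Dv_mul (m₁ := 2) (m₂ := 2) hDw hDw))
  | pred i ih =>
      have h1 : (1 - w)⁻¹ * (1 - w) = 1 := inv_mul_cancel₀ hne
      have key : (1 - w) ^ (-(i : ℤ) - 1) - (1 - ((-(i : ℤ) - 1 : ℤ) : RatFunc ℚ) * w) =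
          ((1 - w) ^ (-(i : ℤ)) - (1 - ((-(i : ℤ) : ℤ) : RatFunc ℚ) * w)) * (1 - w)⁻¹ +
            ((((i : ℤ) : RatFunc ℚ) + 1) * (w * w)) * (1 - w)⁻¹ := by
        rw [zpow_sub_one₀ hne]
        push_cast
        linear_combination (1 + ((i : RatFunc ℚ) + 1) * w) * h1
      rw [key]
      exact Dv_add hn (Dv_mul (m₁ := 4) (m₂ := 0) ih hDinv)
        (Dv_mul (m₁ := 4) (m₂ := 0) (Dv_mul (m₁ := 0) (m₂ := 4) (Dv_add hn (Dv_intcast (i : ℤ)) Dv_one)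
          (Dv_mul (m₁ := 2) (m₂ := 2) hDw hDw)) hDinv)

lemma prod_one_sub_zpow_cong (hn : 0 < n) (m : ℤ) (s : Finset ℕ) (w : ℕ → RatFunc ℚ)
    (hw : ∀ j ∈ s, ∃ a b : Polynomial ℚ, IsCoprime b (cyclotomic n ℚ) ∧
      (cyclotomic n ℚ) ^ 2 ∣ a ∧ w j = ι a / ι b) :
    Dv n 4 ((∏ j ∈ s, (1 - w j) ^ m) - (1 - (m : RatFunc ℚ) * ∑ j ∈ s, w j)) := by
  classical
  induction s using Finset.induction_on with
  | empty => simpa using Dv_zero 4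
  | @insert j s hj ih =>
      obtain ⟨a, b, hb, ha, hwj⟩ := hw j (Finset.mem_insert_self _ _)
      have hw' : ∀ i ∈ s, ∃ a b : Polynomial ℚ, IsCoprime b (cyclotomic n ℚ) ∧
          (cyclotomic n ℚ) ^ 2 ∣ a ∧ w i = ι a / ι b :=
        fun i hi => hw i (Finset.mem_insert_of_mem hi)
      have ih' := ih hw'
      have hDwj : Dv n 2 (w j) := ⟨a, b, hb, ha, hwj⟩
      have hDS : Dv n 2 (∑ i ∈ s, w i) := Dv_sum hn fun i hi => by
        obtain ⟨c, d, hd, hc, hrep⟩ := hw' i hi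
        exact ⟨c, d, hd, hc, hrep⟩
      have hUP : Ugood n (∏ i ∈ s, (1 - w i) ^ m) := Ugood_prod fun i hi => by
        obtain ⟨c, d, hd, hc, hrep⟩ := hw' i hi
        exact Ugood_zpow ⟨d - c, d,
          coprime_sub hd ((dvd_pow_self _ (by norm_num)).trans hc), hd,
          one_sub_rep hn hd hrep⟩ m
      have key : (∏ i ∈ insert j s, (1 - w i) ^ m) -
          (1 - (m : RatFunc ℚ) * ∑ i ∈ insert j s, w i) =
          ((1 - w j) ^ m - (1 - (m : RatFunc ℚ) * w j)) * (∏ i ∈ s, (1 - w i) ^ m) +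
            (1 - (m : RatFunc ℚ) * w j) *
              ((∏ i ∈ s, (1 - w i) ^ m) - (1 - (m : RatFunc ℚ) * ∑ i ∈ s, w i)) +
            ((m : RatFunc ℚ) * (m : RatFunc ℚ)) * (w j * ∑ i ∈ s, w i) := by
        rw [Finset.prod_insert hj, Finset.sum_insert hj]; ring
      rw [key]
      refine Dv_add hn (Dv_add hn ?_ ?_) ?_
      · exact Dv_mul (m₁ := 4) (m₂ := 0) (one_sub_zpow_cong hn hb ha hwj m) hUP.dv0
      · exact Dv_mul (m₁ := 0) (m₂ := 4) (Dv_sub hn Dv_one (Dv_mono (by norm_num)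
          (Dv_mul (m₁ := 0) (m₂ := 2) (Dv_intcast m) hDwj))) ih'
      · exact Dv_mul (m₁ := 0) (m₂ := 4) (Dv_mul (m₁ := 0) (m₂ := 0) (Dv_intcast m) (Dv_intcast m))
          (Dv_mul (m₁ := 2) (m₂ := 2) hDwj hDS)

lemma hqX : q = ι X := RatFunc.algebraMap_X.symm

lemma q_ne : q ≠ 0 := by unfold q; exact RatFunc.X_ne_zero

lemma q_pow_eq (j : ℕ) : q ^ j = ι (X ^ j) := by rw [hqX, map_pow]

lemma one_sub_q_pow_eq (j : ℕ) : 1 - q ^ j = ι (1 - X ^ j) := by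
  rw [map_sub, map_one, q_pow_eq]

lemma one_sub_q_pow_ne {j : ℕ} (hj : 0 < j) : (1 : RatFunc ℚ) - q ^ j ≠ 0 := by
  rw [one_sub_q_pow_eq]
  intro h
  have h2 : (1 - X ^ j : Polynomial ℚ) = 0 := by
    apply (map_eq_zero_iff ι ?_).mp h
    exact IsFractionRing.injective (Polynomial ℚ) (RatFunc ℚ)
  have := congrArg (fun p => Polynomial.coeff p 0) h2
  simp [Polynomial.coeff_X_pow, hj.ne] at this

lemma qPoch_ne (m : ℕ) : qPoch m ≠ 0 := by
  unfold qPoch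
  rw [Finset.prod_ne_zero_iff]
  exact fun i _ => one_sub_q_pow_ne i.succ_pos

lemma qPoch_add (n k : ℕ) :
    qPoch (n + k) = qPoch n * ∏ i ∈ Finset.range k, (1 - q ^ (n + i + 1)) := by
  unfold qPoch
  exact Finset.prod_range_add _ n k

lemma qbinom_succ_formula (n k : ℕ) :
    qbinom (n + k) k = ∏ i ∈ Finset.range k, ((1 - q ^ (n + i + 1)) / (1 - q ^ (i + 1))) := by
  unfold qbinom
  rw [if_pos (Nat.le_add_left k n), Nat.add_sub_cancel, qPoch_add,
    mul_comm (qPoch k) (qPoch n), mul_div_mul_left _ _ (qPoch_ne n)]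
  show _ = ∏ i ∈ Finset.range k, ((1 - q ^ (n + i + 1)) / (1 - q ^ (i + 1)))
  rw [Finset.prod_div_distrib]
  rfl

lemma qbinom_pred_formula (n k : ℕ) (hk : k < n) :
    qbinom (n - 1) k = ∏ i ∈ Finset.range k, ((1 - q ^ (n - (i + 1))) / (1 - q ^ (i + 1))) := by
  have hkn : k ≤ n - 1 := by omega
  unfold qbinom
  rw [if_pos hkn]
  rw [show n - 1 = (n - 1 - k) + k from by omega, qPoch_add,
    show (n - 1 - k + k - k) = n - 1 - k by omega]
  have hnum : (∏ i ∈ Finset.range k, (1 - q ^ ((n-1-k) + i + 1)))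
      = ∏ i ∈ Finset.range k, (1 - q ^ (n - (i + 1))) := by
    rw [← Finset.prod_range_reflect (fun j => 1 - q ^ (n - (j+1))) k]
    apply Finset.prod_congr rfl
    intro j hj
    have hj' : j < k := Finset.mem_range.mp hj
    congr 2
    omega
  rw [hnum, mul_comm (qPoch k) (qPoch (n - 1 - k)),
    mul_div_mul_left _ _ (qPoch_ne (n - 1 - k))]
  show _ = ∏ i ∈ Finset.range k, ((1 - q ^ (n - (i + 1))) / (1 - q ^ (i + 1)))
  rw [Finset.prod_div_distrib]
  rfl


noncomputable def Wf (n j : ℕ) : RatFunc ℚ :=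
  q ^ ((j : ℤ) - (n : ℤ)) * (1 - q ^ n) ^ 2 / (1 - q ^ j) ^ 2

lemma W_rep {n : ℕ} (hn : 0 < n) {j : ℕ} (hj : 0 < j) (hjn : j < n) :
    ∃ a b : Polynomial ℚ, IsCoprime b (cyclotomic n ℚ) ∧ (cyclotomic n ℚ) ^ 2 ∣ a ∧
      Wf n j = ι a / ι b := by
  refine ⟨X ^ j * (1 - X ^ n) ^ 2, X ^ n * (1 - X ^ j) ^ 2, ?_, ?_, ?_⟩
  · exact (cop_X_pow hn n).mul_left ((cop_one_sub_X_pow hn hj hjn).pow_left)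
  · have h1 : cyclotomic n ℚ ∣ (1 - X ^ n) := by
      have := cyclotomic.dvd_X_pow_sub_one n ℚ
      have h2 : (1 - X ^ n : Polynomial ℚ) = -(X ^ n - 1) := by ring
      rw [h2]
      exact this.neg_right
    exact Dvd.dvd.mul_left (pow_dvd_pow_of_dvd h1 2) _
  · unfold Wf
    have hzw : q ^ ((j : ℤ) - (n : ℤ)) = ι (X ^ j) / ι (X ^ n) := by
      rw [zpow_sub₀ q_ne, zpow_natCast, zpow_natCast, q_pow_eq, q_pow_eq]
    rw [hzw, one_sub_q_pow_eq, one_sub_q_pow_eq, map_mul, map_mul]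
    simp only [map_pow]
    ring

lemma pair_eq {n : ℕ} (hn : 0 < n) {j : ℕ} (hj : 0 < j) (hjn : j < n) :
    (1 - q ^ (n + j)) / (1 - q ^ j) * ((1 - q ^ (n - j)) / (1 - q ^ j)) =
      (-(q ^ ((n : ℤ) - (j : ℤ)))) * (1 - Wf n j) := by
  obtain ⟨m, rfl⟩ : ∃ m, n = m + j := ⟨n - j, by omega⟩
  have hm : m + j - j = m := by omega
  have hz1 : q ^ (((m + j : ℕ) : ℤ) - (j : ℤ)) = q ^ m := by
    rw [show ((m + j : ℕ) : ℤ) - (j : ℤ) = (m : ℤ) by push_cast; ring, zpow_natCast]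
  have hz2 : q ^ ((j : ℤ) - ((m + j : ℕ) : ℤ)) = (q ^ m)⁻¹ := by
    rw [show (j : ℤ) - ((m + j : ℕ) : ℤ) = -(m : ℤ) by push_cast; ring, zpow_neg, zpow_natCast]
  unfold Wf
  rw [hm, hz1, hz2]
  have h1 : (1 : RatFunc ℚ) - q ^ j ≠ 0 := one_sub_q_pow_ne hj
  have h2 : (q : RatFunc ℚ) ^ m ≠ 0 := pow_ne_zero m q_ne
  field_simp
  ring

lemma q_zpow_sum (s : Finset ℕ) (g : ℕ → ℤ) :
    ∏ i ∈ s, q ^ g i = q ^ (∑ i ∈ s, g i) := by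
  classical
  induction s using Finset.induction_on with
  | empty => simp
  | insert _ _ hx ih =>
      rw [Finset.prod_insert hx, Finset.sum_insert hx, zpow_add₀ q_ne, ih]

lemma exp_sum (r : ℤ) (n k : ℕ) :
    r * ((n : ℤ) - (k : ℤ)) ^ 2 + (r - 1) * (k : ℤ) +
      (∑ i ∈ Finset.range k, ((n : ℤ) - ((i : ℤ) + 1))) * (2 * r) =
    r * (n : ℤ) ^ 2 - (k : ℤ) := by
  induction k with
  | zero => simp
  | succ k ih =>
      rw [Finset.sum_range_succ]
      push_cast at ih ⊢
      linear_combination ih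

lemma main_term_eq {n : ℕ} (hn : 0 < n) (r : ℤ) {k : ℕ} (hk : k < n) :
    q ^ (r * ((n : ℤ) - (k : ℤ)) ^ 2 + (r - 1) * (k : ℤ)) * qbinom (n + k) k ^ (2 * r) *
      qbinom (n - 1) k ^ (2 * r)
    = q ^ (r * (n : ℤ) ^ 2 - (k : ℤ)) * ∏ i ∈ Finset.range k, (1 - Wf n (i + 1)) ^ (2 * r) := by
  rw [qbinom_succ_formula, qbinom_pred_formula n k hk, mul_assoc, ← mul_zpow,
    ← Finset.prod_mul_distrib]
  have hpair : ∀ i ∈ Finset.range k,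
      (1 - q ^ (n + i + 1)) / (1 - q ^ (i + 1)) * ((1 - q ^ (n - (i + 1))) / (1 - q ^ (i + 1)))
      = (-(q ^ ((n : ℤ) - ((i : ℤ) + 1)))) * (1 - Wf n (i + 1)) := by
    intro i hi
    have hik : i < k := Finset.mem_range.mp hi
    have h := pair_eq hn (j := i + 1) (Nat.succ_pos i) (by omega)
    rw [show n + (i + 1) = n + i + 1 from rfl] at h
    rw [show (((i : ℕ) + 1 : ℕ) : ℤ) = (i : ℤ) + 1 from by push_cast; ring] at h
    exact h
  rw [Finset.prod_congr rfl hpair, Finset.prod_mul_distrib]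
  have hneg : (∏ i ∈ Finset.range k, (-(q ^ ((n : ℤ) - ((i : ℤ) + 1)))))
      = (-1 : RatFunc ℚ) ^ k * q ^ (∑ i ∈ Finset.range k, ((n : ℤ) - ((i : ℤ) + 1))) := by
    have h1 : (∏ i ∈ Finset.range k, (-(q ^ ((n : ℤ) - ((i : ℤ) + 1)))))
        = ∏ i ∈ Finset.range k, ((-1) * q ^ ((n : ℤ) - ((i : ℤ) + 1))) :=
      Finset.prod_congr rfl (fun i _ => by ring)
    rw [h1, Finset.prod_mul_distrib, Finset.prod_const, Finset.card_range, q_zpow_sum]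
  rw [hneg, mul_zpow, mul_zpow]
  have hneg1 : ((-1 : RatFunc ℚ) ^ k) ^ (2 * r) = 1 := by
    rw [← zpow_natCast (-1 : RatFunc ℚ) k, ← zpow_mul, mul_comm ((k : ℤ)) _,
      show (2 : ℤ) * r * (k : ℤ) = (2 * ((k : ℤ) * r)) from by ring, zpow_mul]
    norm_num
  rw [hneg1, one_mul, ← zpow_mul, ← Finset.prod_zpow]
  rw [show q ^ (r * ((n : ℤ) - (k : ℤ)) ^ 2 + (r - 1) * (k : ℤ)) *
      (q ^ ((∑ i ∈ Finset.range k, ((n : ℤ) - ((i : ℤ) + 1))) * (2 * r)) *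
        ∏ i ∈ Finset.range k, (1 - Wf n (i + 1)) ^ (2 * r)) =
      (q ^ (r * ((n : ℤ) - (k : ℤ)) ^ 2 + (r - 1) * (k : ℤ)) *
      q ^ ((∑ i ∈ Finset.range k, ((n : ℤ) - ((i : ℤ) + 1))) * (2 * r))) *
        ∏ i ∈ Finset.range k, (1 - Wf n (i + 1)) ^ (2 * r) from by ring]
  rw [← zpow_add₀ q_ne, exp_sum r n k]

lemma Ugood_q_zpow {n : ℕ} (hn : 0 < n) (z : ℤ) : Ugood n (q ^ z) :=
  Ugood_zpow ⟨X, 1, cop_X hn, isCoprime_one_left, by rw [hqX]; simp⟩ z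

lemma Icc_sum_eq (k : ℕ) (g : ℕ → RatFunc ℚ) :
    ∑ j ∈ Finset.Icc 1 k, g j = ∑ i ∈ Finset.range k, g (i + 1) := by
  rw [← Finset.Ico_add_one_right_eq_Icc, Finset.sum_Ico_eq_sum_range]
  exact Finset.sum_congr (by norm_num) fun i _ => by rw [Nat.add_comm]

lemma W_sum_eq (n k : ℕ) :
    ∑ i ∈ Finset.range k, Wf n (i + 1)
      = (q ^ n)⁻¹ * (1 - q ^ n) ^ 2 * ∑ j ∈ Finset.Icc 1 k, (q ^ j / (1 - q ^ j) ^ 2) := by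
  rw [Icc_sum_eq, Finset.mul_sum]
  apply Finset.sum_congr rfl
  intro i _
  unfold Wf
  rw [zpow_sub₀ q_ne, zpow_natCast, zpow_natCast]
  ring

lemma rhs_eq (n : ℕ) (r : ℤ) (k : ℕ) :
    q ^ (r * (n : ℤ) ^ 2 - (k : ℤ)) *
        (1 - ((2 * r : ℤ) : RatFunc ℚ) * ∑ i ∈ Finset.range k, Wf n (i + 1))
      = q ^ ((n : ℤ) ^ 2 * r) * q ^ (-(k : ℤ)) -
        RatFunc.C ((2 * r : ℤ) : ℚ) * q ^ ((n : ℤ) * ((n : ℤ) * r - 1)) * (1 - q ^ n) ^ 2 *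
          (q ^ (-(k : ℤ)) * ∑ j ∈ Finset.Icc 1 k, q ^ j / (1 - q ^ j) ^ 2) := by
  have hC : RatFunc.C ((2 * r : ℤ) : ℚ) = ((2 * r : ℤ) : RatFunc ℚ) :=
    map_intCast RatFunc.C (2 * r)
  have e1 : q ^ (r * (n : ℤ) ^ 2 - (k : ℤ)) = q ^ ((n : ℤ) ^ 2 * r) * (q ^ k)⁻¹ := by
    rw [show r * (n : ℤ) ^ 2 - (k : ℤ) = (n : ℤ) ^ 2 * r + (-(k : ℤ)) from by ring,
      zpow_add₀ q_ne, zpow_neg, zpow_natCast]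
  have e2 : q ^ ((n : ℤ) * ((n : ℤ) * r - 1)) = q ^ ((n : ℤ) ^ 2 * r) * (q ^ n)⁻¹ := by
    rw [show (n : ℤ) * ((n : ℤ) * r - 1) = (n : ℤ) ^ 2 * r + (-(n : ℤ)) from by ring,
      zpow_add₀ q_ne, zpow_neg, zpow_natCast]
  have e3 : q ^ (-(k : ℤ)) = (q ^ k)⁻¹ := by rw [zpow_neg, zpow_natCast]
  rw [hC, e1, e2, e3, W_sum_eq]
  ring

theorem final_cong (n : ℕ) (hn : 0 < n) (r : ℤ) :
    Dv n 4
      ((∑ k ∈ Finset.range n,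
        q ^ (r * ((n : ℤ) - (k : ℤ)) ^ 2 + (r - 1) * (k : ℤ)) *
          qbinom (n + k) k ^ (2 * r) * qbinom (n - 1) k ^ (2 * r)) -
      (q ^ ((n : ℤ) ^ 2 * r) * ∑ k ∈ Finset.range n, q ^ (-(k : ℤ)) -
        RatFunc.C ((2 * r : ℤ) : ℚ) * q ^ ((n : ℤ) * ((n : ℤ) * r - 1)) * (1 - q ^ n) ^ 2 *
          ∑ k ∈ Finset.range n, q ^ (-(k : ℤ)) *
            ∑ j ∈ Finset.Icc 1 k, q ^ j / (1 - q ^ j) ^ 2)) := by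
  rw [Finset.mul_sum, Finset.mul_sum, ← Finset.sum_sub_distrib, ← Finset.sum_sub_distrib]
  apply Dv_sum hn
  intro k hk
  have hkn : k < n := Finset.mem_range.mp hk
  rw [main_term_eq hn r hkn, ← rhs_eq n r k, ← mul_sub]
  exact Dv_mul (m₁ := 0) (m₂ := 4) (Ugood.dv0 (Ugood_q_zpow hn _))
    (prod_one_sub_zpow_cong hn (2 * r) (Finset.range k) (fun j => Wf n (j + 1))
      (fun j hj => W_rep hn (Nat.succ_pos j) (by
        have := Finset.mem_range.mp hj; omega)))
end SRaux


/-- Equation (2.3): for a positive integer `n` and an arbitrary integer `r`,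
`∑_{k=0}^{n-1} q^{r(n-k)²+(r-1)k} [n+k choose k]^{2r} [n-1 choose k]^{2r}
  ≡ q^{n²r} ∑_{k=0}^{n-1} q^{-k}
    - 2r q^{n(nr-1)} (1-q^n)² ∑_{k=0}^{n-1} q^{-k} ∑_{j=1}^k q^j/(1-q^j)²  (mod Φ_n(q)⁴)`. -/
theorem sum_reduction_mod_cyclotomic_pow_four (n : ℕ) (hn : 0 < n) (r : ℤ) :
    ratModEq ((Polynomial.cyclotomic n ℚ) ^ 4)
      (∑ k ∈ Finset.range n,
        q ^ (r * ((n : ℤ) - (k : ℤ)) ^ 2 + (r - 1) * (k : ℤ)) *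
          qbinom (n + k) k ^ (2 * r) * qbinom (n - 1) k ^ (2 * r))
      (q ^ ((n : ℤ) ^ 2 * r) * ∑ k ∈ Finset.range n, q ^ (-(k : ℤ)) -
        RatFunc.C ((2 * r : ℤ) : ℚ) * q ^ ((n : ℤ) * ((n : ℤ) * r - 1)) * (1 - q ^ n) ^ 2 *
          ∑ k ∈ Finset.range n, q ^ (-(k : ℤ)) *
            ∑ j ∈ Finset.Icc 1 k, q ^ j / (1 - q ^ j) ^ 2) := by
  obtain ⟨a, b, hb, ha, heq⟩ := SRaux.final_cong n hn r
  exact ⟨a, b, hb.pow_right, ha, heq⟩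
end

section
/- Let n be a positive integer. Then the following identity holds in ℚ(q): ∑_{k=0}^{n-1} q^{-k} ∑_{j=1}^{k} q^j/(1-q^j)^2 = (1/(q^{n-1}(q-1))) · ( ∑_{j=1}^{n-1} 1/(1-q^j) − (1-q^n) · ∑_{j=1}^{n-1} 1/(1-q^j)^2 ). -/
open Finset Polynomial

lemma my_hq0 : q ≠ 0 := RatFunc.X_ne_zero

lemma my_hq_pow_ne_one (j : ℕ) (hj : 1 ≤ j) : q ^ j ≠ 1 := by
  intro h
  have h2 : (Polynomial.X : ℚ[X]) ^ j = 1 := by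
    apply IsFractionRing.injective (Polynomial ℚ) (RatFunc ℚ)
    simpa [q, map_pow, map_one, RatFunc.algebraMap_X] using h
  have := congrArg Polynomial.natDegree h2
  simp [Polynomial.natDegree_X_pow] at this
  omega

lemma my_h1q (j : ℕ) (hj : 1 ≤ j) : (1 : RatFunc ℚ) - q ^ j ≠ 0 :=
  sub_ne_zero.mpr (Ne.symm (my_hq_pow_ne_one j hj))

lemma my_hq1 : q - 1 ≠ 0 := by
  have := my_hq_pow_ne_one 1 le_rfl
  rw [pow_one] at this
  exact sub_ne_zero.mpr this

lemma my_key_sum (N : ℕ) : (∑ j ∈ Finset.Icc 1 N, q ^ j / (1 - q ^ j) ^ 2)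
    = (∑ j ∈ Finset.Icc 1 N, 1 / (1 - q ^ j) ^ 2) - ∑ j ∈ Finset.Icc 1 N, 1 / (1 - q ^ j) := by
  rw [← Finset.sum_sub_distrib]
  refine Finset.sum_congr rfl fun j hj => ?_
  have h := my_h1q j (Finset.mem_Icc.mp hj).1
  field_simp
  ring

/-- Equation (2.5): for a positive integer `n`, the identity in `ℚ(q)`
`∑_{k=0}^{n-1} q^{-k} ∑_{j=1}^k q^j/(1-q^j)²
  = (1/(q^{n-1}(q-1))) (∑_{j=1}^{n-1} 1/(1-q^j) - (1-q^n) ∑_{j=1}^{n-1} 1/(1-q^j)²)`. -/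
theorem double_sum_identity (n : ℕ) (hn : 0 < n) :
    (∑ k ∈ Finset.range n, q ^ (-(k : ℤ)) *
        ∑ j ∈ Finset.Icc 1 k, q ^ j / (1 - q ^ j) ^ 2)
      = 1 / (q ^ (n - 1) * (q - 1)) *
        ((∑ j ∈ Finset.Icc 1 (n - 1), 1 / (1 - q ^ j)) -
          (1 - q ^ n) * ∑ j ∈ Finset.Icc 1 (n - 1), 1 / (1 - q ^ j) ^ 2) := by
  induction n, hn using Nat.le_induction with
  | base => simp
  | succ n hn ih =>
    obtain ⟨m, rfl⟩ : ∃ m, n = m + 1 := ⟨n - 1, by omega⟩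
    simp only [Nat.add_sub_cancel] at ih ⊢
    rw [Finset.sum_range_succ, ih, my_key_sum,
      Finset.sum_Icc_succ_top (by omega : 1 ≤ m + 1),
      Finset.sum_Icc_succ_top (by omega : 1 ≤ m + 1)]
    have h1 := my_h1q (m + 1) (by omega)
    have hqp : q ^ (m + 1) ≠ 0 := pow_ne_zero _ my_hq0
    have hqm : q ^ m ≠ 0 := pow_ne_zero _ my_hq0
    have hq1' := my_hq1
    simp only [zpow_neg, zpow_natCast]
    field_simp
    ring
end

section
/- Let n and r be positive integers. Then in ℤ[q], ∑_{k=0}^{n-1} q^{r(n-k)^2+(r-1)k} · [n+k choose k]_q^{2r} · [n-1 choose k]_q^{2r} ≡ q·[n] (mod [n]·Φ_n(q)), i.e. the difference is divisible by [n]·Φ_n(q) in ℚ[q]. -/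
open Finset Polynomial

/-- q-factorial as a polynomial. -/
noncomputable def qfac (m : ℕ) : Polynomial ℚ := ∏ i ∈ Finset.range m, (1 - X ^ (i + 1))

/-- Gaussian binomial polynomial. -/
noncomputable def Gp : ℕ → ℕ → Polynomial ℚ
  | _, 0 => 1
  | 0, _ + 1 => 0
  | a + 1, k + 1 => Gp a k + X ^ (k + 1) * Gp a (k + 1)

@[simp] lemma Gp_zero_right (a : ℕ) : Gp a 0 = 1 := by cases a <;> rfl

lemma Gp_eq_zero {a k : ℕ} (h : a < k) : Gp a k = 0 := by
  induction a generalizing k with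
  | zero => cases k with
    | zero => omega
    | succ k => rfl
  | succ a ih =>
    cases k with
    | zero => omega
    | succ k =>
      show Gp a k + X ^ (k + 1) * Gp a (k + 1) = 0
      rw [ih (by omega), ih (by omega), mul_zero, add_zero]

lemma qfac_succ (m : ℕ) : qfac (m + 1) = qfac m * (1 - X ^ (m + 1)) := by
  rw [qfac, Finset.prod_range_succ]; rfl

lemma qfac_zero : qfac 0 = 1 := by simp [qfac]

lemma one_sub_X_pow_ne_zero (i : ℕ) : (1 - X ^ (i + 1) : Polynomial ℚ) ≠ 0 := by
  intro h
  have := congrArg (Polynomial.eval 0) h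
  simp at this

lemma qfac_ne_zero (m : ℕ) : qfac m ≠ 0 := by
  rw [qfac]
  exact Finset.prod_ne_zero_iff.2 fun i _ => one_sub_X_pow_ne_zero i

lemma Gp_self (a : ℕ) : Gp a a = 1 := by
  induction a with
  | zero => rfl
  | succ a iha =>
    show Gp a a + X ^ (a + 1) * Gp a (a + 1) = 1
    rw [Gp_eq_zero (show a < a + 1 by omega), mul_zero, add_zero, iha]

lemma Gp_key' : ∀ n a b : ℕ, a + b = n → Gp (a + b) a * (qfac a * qfac b) = qfac (a + b) := by
  intro n
  induction n with
  | zero => intro a b h; obtain ⟨rfl, rfl⟩ : a = 0 ∧ b = 0 := by omega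
            simp [qfac_zero]
  | succ n ih =>
    intro a b h
    cases a with
    | zero => simp [qfac_zero]
    | succ a =>
      cases b with
      | zero =>
        have h1 : Gp (a + 1 + 0) (a + 1) = 1 := Gp_self (a + 1)
        rw [h1, qfac_zero, one_mul, mul_one]
      | succ b =>
        have e1 : a + 1 + (b + 1) = (a + (b + 1)) + 1 := by omega
        have hG : Gp (a + 1 + (b + 1)) (a + 1)
            = Gp (a + (b + 1)) a + X ^ (a + 1) * Gp (a + (b + 1)) (a + 1) := by
          rw [e1]; rfl
        have ih1 := ih a (b + 1) (by omega)
        have ih2 := ih (a + 1) b (by omega)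
        have e2 : a + 1 + b = a + (b + 1) := by omega
        rw [e2] at ih2
        have e3 : a + 1 + (b + 1) = (a + (b + 1)) + 1 := e1
        rw [hG, e3, qfac_succ (a + (b + 1))]
        rw [qfac_succ a, qfac_succ b]
        have hx : (1 - X ^ (a + 1)) + X ^ (a + 1) * (1 - X ^ (b + 1))
            = (1 - X ^ ((a + (b + 1)) + 1) : Polynomial ℚ) := by
          have : (a + (b + 1)) + 1 = (a + 1) + (b + 1) := by omega
          rw [this, pow_add]; ring
        calc (Gp (a + (b + 1)) a + X ^ (a + 1) * Gp (a + (b + 1)) (a + 1)) *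
              (qfac a * (1 - X ^ (a + 1)) * (qfac b * (1 - X ^ (b + 1))))
            = Gp (a + (b + 1)) a * (qfac a * (qfac b * (1 - X ^ (b + 1)))) * (1 - X ^ (a + 1))
              + Gp (a + (b + 1)) (a + 1) * (qfac a * (1 - X ^ (a + 1)) * qfac b) *
                (X ^ (a + 1) * (1 - X ^ (b + 1))) := by ring
          _ = qfac (a + (b + 1)) * (1 - X ^ (a + 1))
              + qfac (a + (b + 1)) * (X ^ (a + 1) * (1 - X ^ (b + 1))) := by
                rw [← qfac_succ b, ih1]
                rw [show qfac a * (1 - X ^ (a + 1)) * qfac b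
                    = qfac (a + 1) * qfac b from by rw [qfac_succ], ih2]
          _ = qfac (a + (b + 1)) * (1 - X ^ ((a + (b + 1)) + 1)) := by rw [← hx]; ring

lemma Gp_key {a k : ℕ} (h : k ≤ a) : Gp a k * (qfac k * qfac (a - k)) = qfac a := by
  have := Gp_key' (k + (a - k)) k (a - k) rfl
  rwa [Nat.add_sub_cancel' h] at this

lemma Gp_L1 {a k : ℕ} (h : k < a) :
    Gp a (k + 1) * (1 - X ^ (k + 1)) = Gp a k * (1 - X ^ (a - k)) := by
  have h1 := Gp_key (show k + 1 ≤ a by omega)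
  have h2 := Gp_key (show k ≤ a by omega)
  have e1 : a - k = (a - (k + 1)) + 1 := by omega
  rw [qfac_succ k] at h1
  rw [e1, qfac_succ (a - (k + 1))] at h2
  apply mul_right_cancel₀ (b := qfac k * qfac (a - (k + 1)))
    (mul_ne_zero (qfac_ne_zero k) (qfac_ne_zero (a - (k + 1))))
  calc Gp a (k + 1) * (1 - X ^ (k + 1)) * (qfac k * qfac (a - (k + 1)))
      = Gp a (k + 1) * (qfac k * (1 - X ^ (k + 1)) * qfac (a - (k + 1))) := by ring
    _ = qfac a := h1
    _ = Gp a k * (qfac k * (qfac (a - (k + 1)) * (1 - X ^ (a - (k + 1) + 1)))) := h2.symm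
    _ = Gp a k * (1 - X ^ (a - k)) * (qfac k * qfac (a - (k + 1))) := by rw [← e1]; ring

lemma Gp_L2 {a k : ℕ} (h : k ≤ a) :
    Gp (a + 1) k * (1 - X ^ (a + 1 - k)) = Gp a k * (1 - X ^ (a + 1)) := by
  have h1 := Gp_key (show k ≤ a + 1 by omega)
  have h2 := Gp_key h
  have e1 : a + 1 - k = (a - k) + 1 := by omega
  rw [e1, qfac_succ (a - k)] at h1
  apply mul_right_cancel₀ (b := qfac k * qfac (a - k))
    (mul_ne_zero (qfac_ne_zero k) (qfac_ne_zero (a - k)))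
  calc Gp (a + 1) k * (1 - X ^ (a + 1 - k)) * (qfac k * qfac (a - k))
      = Gp (a + 1) k * (qfac k * (qfac (a - k) * (1 - X ^ (a - k + 1)))) := by
        rw [e1]; ring
    _ = qfac (a + 1) := h1
    _ = qfac a * (1 - X ^ (a + 1)) := qfac_succ a
    _ = Gp a k * (qfac k * qfac (a - k)) * (1 - X ^ (a + 1)) := by rw [h2]
    _ = Gp a k * (1 - X ^ (a + 1)) * (qfac k * qfac (a - k)) := by ring

/-- The combined step identity for the product of the two Gaussian binomials. -/
lemma Dstep {n k : ℕ} (h : k + 1 < n) :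
    Gp (n + k + 1) (k + 1) * Gp (n - 1) (k + 1) * ((1 - X ^ (k + 1)) * (1 - X ^ (k + 1)))
      = Gp (n + k) k * Gp (n - 1) k * ((1 - X ^ (n + k + 1)) * (1 - X ^ (n - k - 1))) := by
  have A1 : Gp (n + k + 1) (k + 1) * (1 - X ^ (k + 1))
      = Gp (n + k + 1) k * (1 - X ^ (n + 1)) := by
    have := Gp_L1 (a := n + k + 1) (k := k) (by omega)
    rwa [show n + k + 1 - k = n + 1 by omega] at this
  have A2 : Gp (n + k + 1) k * (1 - X ^ (n + 1)) = Gp (n + k) k * (1 - X ^ (n + k + 1)) := by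
    have := Gp_L2 (a := n + k) (k := k) (by omega)
    rwa [show n + k + 1 - k = n + 1 by omega] at this
  have A3 : Gp (n - 1) (k + 1) * (1 - X ^ (k + 1)) = Gp (n - 1) k * (1 - X ^ (n - k - 1)) := by
    have := Gp_L1 (a := n - 1) (k := k) (by omega)
    rwa [show n - 1 - k = n - k - 1 by omega] at this
  calc Gp (n + k + 1) (k + 1) * Gp (n - 1) (k + 1) * ((1 - X ^ (k + 1)) * (1 - X ^ (k + 1)))
      = (Gp (n + k + 1) (k + 1) * (1 - X ^ (k + 1)))
        * (Gp (n - 1) (k + 1) * (1 - X ^ (k + 1))) := by ring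
    _ = (Gp (n + k) k * (1 - X ^ (n + k + 1))) * (Gp (n - 1) k * (1 - X ^ (n - k - 1))) := by
        rw [A1, A2, A3]
    _ = Gp (n + k) k * Gp (n - 1) k * ((1 - X ^ (n + k + 1)) * (1 - X ^ (n - k - 1))) := by ring

/-- Exact algebraic identity behind the congruence modulo `Φ_n²`. -/
lemma Eident {n j : ℕ} (h : j ≤ n) :
    (X : Polynomial ℚ) ^ j * ((1 - X ^ (n + j)) * (1 - X ^ (n - j))) + (1 - X ^ j) ^ 2 * X ^ n
      = X ^ j * (X ^ n - 1) ^ 2 := by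
  obtain ⟨t, rfl⟩ : ∃ t, n = j + t := ⟨n - j, by omega⟩
  rw [show j + t + j = t + j + j by omega, show j + t - j = t by omega]
  rw [pow_add, pow_add, pow_add]
  ring

lemma qint_eq_prod {n : ℕ} (hn : 0 < n) :
    qint n = ∏ i ∈ n.divisors.erase 1, cyclotomic i ℚ :=
  (prod_cyclotomic_eq_geom_sum hn ℚ).symm

lemma cyclotomic_dvd_qint {d n : ℕ} (hd : d ∣ n) (hd1 : d ≠ 1) (hn : 0 < n) :
    cyclotomic d ℚ ∣ qint n := by
  rw [qint_eq_prod hn]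
  exact Finset.dvd_prod_of_mem _ (by
    simp only [Finset.mem_erase, Nat.mem_divisors]
    exact ⟨hd1, hd, by omega⟩)

lemma unit_of_coprime_mk {g p : Polynomial ℚ} (h : IsCoprime p g) :
    IsUnit (AdjoinRoot.mk g p) := by
  obtain ⟨u, v, huv⟩ := h
  have h1 : AdjoinRoot.mk g u * AdjoinRoot.mk g p = 1 := by
    have := congrArg (AdjoinRoot.mk g) huv
    simpa [map_add, map_mul, AdjoinRoot.mk_self] using this
  exact IsUnit.of_mul_eq_one _ (by rw [mul_comm]; exact h1)

lemma coprime_one_sub_X_pow {n j : ℕ} (hj : 0 < j) (hnj : ¬ n ∣ j) :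
    IsCoprime (1 - X ^ j : Polynomial ℚ) (cyclotomic n ℚ) := by
  have h1 : IsCoprime (X ^ j - 1 : Polynomial ℚ) (cyclotomic n ℚ) := by
    rw [← prod_cyclotomic_eq_X_pow_sub_one hj ℚ]
    apply IsCoprime.prod_left
    intro i hi
    refine cyclotomic.isCoprime_rat fun he => hnj ?_
    rw [he] at hi
    exact (Nat.mem_divisors.mp hi).1
  have := h1.neg_left
  rwa [neg_sub] at this

lemma coprime_X_cyclotomic {n : ℕ} (hn : 2 ≤ n) :
    IsCoprime (X : Polynomial ℚ) (cyclotomic n ℚ) := by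
  refine ⟨-(cyclotomic n ℚ).divX, 1, ?_⟩
  have h0 := Polynomial.X_mul_divX_add (cyclotomic n ℚ)
  rw [cyclotomic_coeff_zero ℚ (by omega : 1 < n), Polynomial.C_1] at h0
  rw [one_mul]
  linear_combination -h0

lemma triangle_mul_two (k : ℕ) : (∑ i ∈ Finset.range k, (i + 1)) * 2 = k * (k + 1) := by
  induction k with
  | zero => simp
  | succ k ih => rw [Finset.sum_range_succ, add_mul, ih]; ring

lemma expid1 {n r k : ℕ} (hk : k < n) (hr : 1 ≤ r) :
    r * (n - k) ^ 2 + (r - 1) * k + k + 2 * r * k * n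
      = r * n * n + 2 * r * (∑ i ∈ Finset.range k, (i + 1)) := by
  obtain ⟨m, rfl⟩ : ∃ m, n = k + m := ⟨n - k, by omega⟩
  obtain ⟨r', rfl⟩ : ∃ r', r = r' + 1 := ⟨r - 1, by omega⟩
  rw [show k + m - k = m by omega, show r' + 1 - 1 = r' by omega]
  rw [show 2 * (r' + 1) * (∑ i ∈ Finset.range k, (i + 1))
      = (r' + 1) * ((∑ i ∈ Finset.range k, (i + 1)) * 2) from by ring, triangle_mul_two]
  ring

theorem modPhiSq (n r : ℕ) (hn : 2 ≤ n) (hr : 1 ≤ r) :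
    cyclotomic n ℚ ^ 2 ∣
      (∑ k ∈ Finset.range n,
        X ^ (r * (n - k) ^ 2 + (r - 1) * k) * Gp (n + k) k ^ (2 * r) * Gp (n - 1) k ^ (2 * r))
        - X * qint n := by
  set Φ : Polynomial ℚ := cyclotomic n ℚ with hΦ
  set φ : Polynomial ℚ →+* AdjoinRoot (Φ ^ 2) := AdjoinRoot.mk (Φ ^ 2) with hφdef
  have hφ : ∀ p : Polynomial ℚ, φ p = AdjoinRoot.mk (Φ ^ 2) p := fun p => rfl
  set y : AdjoinRoot (Φ ^ 2) := φ X with hy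
  -- units
  have hunit : ∀ p : Polynomial ℚ, IsCoprime p Φ → IsUnit (φ p) := by
    intro p hp
    exact unit_of_coprime_mk (hp.pow_right (n := 2))
  have hyunit : IsUnit y := hunit X (coprime_X_cyclotomic hn)
  have hcunit : ∀ j : ℕ, 0 < j → j < n → IsUnit (1 - y ^ j) := by
    intro j h1 h2
    have : IsUnit (φ (1 - X ^ j)) :=
      hunit _ (coprime_one_sub_X_pow h1 (by intro hd; exact absurd (Nat.le_of_dvd h1 hd) (by omega)))
    simpa [map_sub, map_one, map_pow] using this
  -- (X^n - 1)^2 maps to zero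
  have hzero : (y ^ n - 1) ^ 2 = 0 := by
    have hdvd : Φ ^ 2 ∣ (X ^ n - 1 : Polynomial ℚ) ^ 2 :=
      pow_dvd_pow_of_dvd (cyclotomic.dvd_X_pow_sub_one n ℚ) 2
    have : φ ((X ^ n - 1) ^ 2) = 0 := by
      rw [hφ, AdjoinRoot.mk_eq_zero]; exact hdvd
    simpa [map_sub, map_one, map_pow] using this
  -- main induction
  have hI : ∀ k, k < n →
      y ^ (∑ i ∈ Finset.range k, (i + 1)) * φ (Gp (n + k) k) * φ (Gp (n - 1) k)
        = (-(y ^ n)) ^ k := by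
    intro k
    induction k with
    | zero => intro _; simp
    | succ k ih =>
      intro hk1
      have ihk := ih (by omega)
      have hstep := congrArg φ (Dstep (n := n) (k := k) hk1)
      have hE := congrArg φ (Eident (n := n) (j := k + 1) (by omega))
      simp only [map_mul, map_sub, map_add, map_one, map_pow, ← hy] at hstep hE
      have hE' : y ^ (k + 1) * ((1 - y ^ (n + k + 1)) * (1 - y ^ (n - k - 1)))
          = -((1 - y ^ (k + 1)) * (1 - y ^ (k + 1)) * y ^ n) := by
        have : y ^ (k + 1) * ((1 - y ^ (n + k + 1)) * (1 - y ^ (n - k - 1)))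
            + (1 - y ^ (k + 1)) ^ 2 * y ^ n = y ^ (k + 1) * (y ^ n - 1) ^ 2 := hE
        rw [hzero, mul_zero] at this
        have h2 := eq_sub_of_add_eq this
        rw [h2]; ring
      have hcu : IsUnit ((1 - y ^ (k + 1)) * (1 - y ^ (k + 1))) :=
        (hcunit (k + 1) (by omega) (by omega)).mul (hcunit (k + 1) (by omega) (by omega))
      apply hcu.mul_right_cancel
      rw [Finset.sum_range_succ]
      calc y ^ ((∑ i ∈ Finset.range k, (i + 1)) + (k + 1)) * φ (Gp (n + k + 1) (k + 1))
            * φ (Gp (n - 1) (k + 1)) * ((1 - y ^ (k + 1)) * (1 - y ^ (k + 1)))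
          = y ^ (∑ i ∈ Finset.range k, (i + 1)) * y ^ (k + 1)
            * (φ (Gp (n + k + 1) (k + 1)) * φ (Gp (n - 1) (k + 1))
                * ((1 - y ^ (k + 1)) * (1 - y ^ (k + 1)))) := by rw [pow_add]; ring
        _ = y ^ (∑ i ∈ Finset.range k, (i + 1)) * y ^ (k + 1)
            * (φ (Gp (n + k) k) * φ (Gp (n - 1) k)
                * ((1 - y ^ (n + k + 1)) * (1 - y ^ (n - k - 1)))) := by rw [hstep]
        _ = y ^ (∑ i ∈ Finset.range k, (i + 1)) * φ (Gp (n + k) k) * φ (Gp (n - 1) k)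
            * (y ^ (k + 1) * ((1 - y ^ (n + k + 1)) * (1 - y ^ (n - k - 1)))) := by ring
        _ = (-(y ^ n)) ^ k * (-((1 - y ^ (k + 1)) * (1 - y ^ (k + 1)) * y ^ n)) := by
            rw [ihk, hE']
        _ = (-(y ^ n)) ^ (k + 1) * ((1 - y ^ (k + 1)) * (1 - y ^ (k + 1))) := by
            rw [show (-(y ^ n)) ^ (k + 1) = (-(y ^ n)) ^ k * (-(y ^ n)) from pow_succ _ _]
            ring
  -- term-level identity
  have hterm : ∀ k, k < n →
      φ (X ^ (r * (n - k) ^ 2 + (r - 1) * k) * Gp (n + k) k ^ (2 * r) * Gp (n - 1) k ^ (2 * r))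
        * y ^ k = y ^ (r * n * n) := by
    intro k hk
    have h1 := congrArg (· ^ (2 * r)) (hI k hk)
    have h2 : (((-(y ^ n)) ^ k) ^ (2 * r)) = y ^ (2 * r * k * n) := by
      rw [← pow_mul, Even.neg_pow (by exact ⟨r * k, by ring⟩ : Even (k * (2 * r))), ← pow_mul]
      congr 1
      ring
    rw [h2] at h1
    have h3 : y ^ (2 * r * (∑ i ∈ Finset.range k, (i + 1)))
        * (φ (Gp (n + k) k) ^ (2 * r) * φ (Gp (n - 1) k) ^ (2 * r)) = y ^ (2 * r * k * n) := by
      rw [← h1, mul_pow, mul_pow, ← pow_mul]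
      rw [mul_comm (∑ i ∈ Finset.range k, (i + 1)) (2 * r)]
      ring
    have hTunit : IsUnit (y ^ (2 * r * (∑ i ∈ Finset.range k, (i + 1)))) := hyunit.pow _
    apply hTunit.mul_right_cancel
    simp only [map_mul, map_pow, ← hy]
    calc y ^ (r * (n - k) ^ 2 + (r - 1) * k) * φ (Gp (n + k) k) ^ (2 * r)
          * φ (Gp (n - 1) k) ^ (2 * r) * y ^ k * y ^ (2 * r * (∑ i ∈ Finset.range k, (i + 1)))
        = y ^ (r * (n - k) ^ 2 + (r - 1) * k) * y ^ k
          * (y ^ (2 * r * (∑ i ∈ Finset.range k, (i + 1)))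
             * (φ (Gp (n + k) k) ^ (2 * r) * φ (Gp (n - 1) k) ^ (2 * r))) := by ring
      _ = y ^ (r * (n - k) ^ 2 + (r - 1) * k) * y ^ k * y ^ (2 * r * k * n) := by rw [h3]
      _ = y ^ (r * (n - k) ^ 2 + (r - 1) * k + k + 2 * r * k * n) := by
          rw [← pow_add, ← pow_add]
      _ = y ^ (r * n * n + 2 * r * (∑ i ∈ Finset.range k, (i + 1))) := by
          rw [expid1 hk hr]
      _ = y ^ (r * n * n) * y ^ (2 * r * (∑ i ∈ Finset.range k, (i + 1))) := by rw [pow_add]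
  -- sum it up
  have hsum : φ ((∑ k ∈ Finset.range n,
      X ^ (r * (n - k) ^ 2 + (r - 1) * k) * Gp (n + k) k ^ (2 * r) * Gp (n - 1) k ^ (2 * r)))
      * y ^ (n - 1) = y ^ (r * n * n) * φ (qint n) := by
    rw [map_sum, Finset.sum_mul]
    have : ∀ k ∈ Finset.range n,
        φ (X ^ (r * (n - k) ^ 2 + (r - 1) * k) * Gp (n + k) k ^ (2 * r) * Gp (n - 1) k ^ (2 * r))
          * y ^ (n - 1) = y ^ (r * n * n) * y ^ (n - 1 - k) := by
      intro k hk
      have hk' : k < n := Finset.mem_range.mp hk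
      have : y ^ (n - 1) = y ^ k * y ^ (n - 1 - k) := by
        rw [← pow_add, show k + (n - 1 - k) = n - 1 by omega]
      rw [this, ← mul_assoc, hterm k hk']
    rw [Finset.sum_congr rfl this, ← Finset.mul_sum]
    congr 1
    rw [Finset.sum_range_reflect (fun i => y ^ i) n]
    simp only [qint, map_sum, map_pow, ← hy]
  -- right side
  have hrhs : φ (X * qint n) * y ^ (n - 1) = y ^ (r * n * n) * φ (qint n) := by
    have h1 : φ (X * qint n) * y ^ (n - 1) = φ (X ^ n * qint n) := by
      simp only [map_mul, map_pow, ← hy]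
      have hyn : y ^ n = y * y ^ (n - 1) := by
        rw [← pow_succ', show n - 1 + 1 = n by omega]
      rw [hyn]; ring
    have h2 : φ (X ^ n * qint n) = φ (X ^ (r * n * n) * qint n) := by
      rw [hφ, hφ, AdjoinRoot.mk_eq_mk]
      have hnn : n + n * (r * n - 1) = r * n * n := by
        obtain ⟨c, hc⟩ : ∃ c, r * n = c + 1 :=
          ⟨r * n - 1, by have := Nat.mul_le_mul hr (show 1 ≤ n by omega); omega⟩
        rw [hc, Nat.add_sub_cancel]; ring
      have : (X : Polynomial ℚ) ^ (r * n * n) - X ^ n = X ^ n * ((X ^ n) ^ (r * n - 1) - 1) := by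
        rw [mul_sub, mul_one, ← pow_mul, ← pow_add, hnn]
      have hd1 : (X ^ n - 1 : Polynomial ℚ) ∣ ((X ^ n) ^ (r * n - 1) - 1) := by
        simpa using sub_dvd_pow_sub_pow (X ^ n : Polynomial ℚ) 1 (r * n - 1)
      have hd2 : Φ ^ 2 ∣ (X ^ n - 1) * qint n := by
        have hq : Φ ∣ qint n := cyclotomic_dvd_qint dvd_rfl (by omega) (by omega)
        obtain ⟨c, hc⟩ := hq
        have hx : (X ^ n - 1 : Polynomial ℚ) = qint n * (X - 1) := by
          rw [qint]; exact (geom_sum_mul X n).symm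
        rw [hx, hc]
        exact ⟨c * (X - 1) * c, by ring⟩
      obtain ⟨c, hc⟩ := hd1
      obtain ⟨e, he⟩ := hd2
      have hdvd : Φ ^ 2 ∣ (X ^ (r * n * n) - X ^ n) * qint n := by
        refine ⟨X ^ n * c * e, ?_⟩
        calc (X ^ (r * n * n) - X ^ n) * qint n
            = X ^ n * c * ((X ^ n - 1) * qint n) := by rw [this, hc]; ring
          _ = Φ ^ 2 * (X ^ n * c * e) := by rw [he]; ring
      rw [show X ^ n * qint n - X ^ (r * n * n) * qint n
          = -((X ^ (r * n * n) - X ^ n) * qint n) from by ring]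
      exact dvd_neg.mpr hdvd
    rw [h1, h2]
    simp only [map_mul, map_pow, ← hy]
  -- conclude
  have hcancel : φ ((∑ k ∈ Finset.range n,
      X ^ (r * (n - k) ^ 2 + (r - 1) * k) * Gp (n + k) k ^ (2 * r) * Gp (n - 1) k ^ (2 * r)))
      = φ (X * qint n) := by
    have hu : IsUnit (y ^ (n - 1)) := hyunit.pow _
    apply hu.mul_right_cancel
    rw [hsum, hrhs]
  rw [← AdjoinRoot.mk_eq_mk, ← hφ, ← hφ]
  exact hcancel

lemma expid2 {n r k : ℕ} (hk : k + 1 ≤ n) (hr : 1 ≤ r) :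
    (r * (n - (k + 1)) ^ 2 + (r - 1) * (k + 1) + 1) + n * (2 * r)
      = 2 * r * (k + 1) + (r * (n - k) ^ 2 + (r - 1) * k) := by
  obtain ⟨t, rfl⟩ : ∃ t, n = k + 1 + t := ⟨n - (k + 1), by omega⟩
  obtain ⟨r', rfl⟩ : ∃ r', r = r' + 1 := ⟨r - 1, by omega⟩
  rw [show k + 1 + t - k = t + 1 by omega, show k + 1 + t - (k + 1) = t by omega,
    show r' + 1 - 1 = r' by omega]
  ring

lemma sum_range_mul_split {M : Type*} [AddCommMonoid M] (f : ℕ → M) (d m : ℕ) :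
    ∑ k ∈ Finset.range (d * m), f k = ∑ j ∈ Finset.range m, ∑ s ∈ Finset.range d, f (d * j + s) := by
  induction m with
  | zero => simp
  | succ m ih =>
    rw [Nat.mul_succ, Finset.sum_range_add, ih, Finset.sum_range_succ]

theorem modPhiD (n r d m : ℕ) (hd : 2 ≤ d) (hm : 1 ≤ m) (hn : n = d * m) (hr : 1 ≤ r) :
    cyclotomic d ℚ ∣
      (∑ k ∈ Finset.range n,
        X ^ (r * (n - k) ^ 2 + (r - 1) * k) * Gp (n + k) k ^ (2 * r) * Gp (n - 1) k ^ (2 * r))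
        - X * qint n := by
  haveI : Fact (Irreducible (cyclotomic d ℚ)) := ⟨cyclotomic.irreducible_rat (by omega)⟩
  set ψ : Polynomial ℚ →+* AdjoinRoot (cyclotomic d ℚ) := AdjoinRoot.mk (cyclotomic d ℚ)
    with hψdef
  set ω : AdjoinRoot (cyclotomic d ℚ) := ψ X with hω0
  haveI : CharZero (AdjoinRoot (cyclotomic d ℚ)) :=
    charZero_of_injective_algebraMap (algebraMap ℚ (AdjoinRoot (cyclotomic d ℚ))).injective
  haveI : NeZero ((d : AdjoinRoot (cyclotomic d ℚ))) := ⟨Nat.cast_ne_zero.mpr (by omega)⟩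
  have hψ : ∀ p : Polynomial ℚ, ψ p = AdjoinRoot.mk (cyclotomic d ℚ) p := fun _ => rfl
  have hωroot : IsRoot (cyclotomic d (AdjoinRoot (cyclotomic d ℚ))) ω := by
    have h1 : aeval (AdjoinRoot.root (cyclotomic d ℚ)) (cyclotomic d ℚ) = 0 := by
      exact (AdjoinRoot.aeval_eq _).trans AdjoinRoot.mk_self
    have h2 : ω = AdjoinRoot.root (cyclotomic d ℚ) := by
      rw [hω0, hψ, AdjoinRoot.mk_X]
    rw [← map_cyclotomic d (algebraMap ℚ (AdjoinRoot (cyclotomic d ℚ)))]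
    show eval ω _ = 0
    rw [eval_map, ← aeval_def, h2, h1]
  have hprim : IsPrimitiveRoot ω d := (isRoot_cyclotomic_iff).mp hωroot
  have hωn : ω ^ n = 1 := by rw [hn, pow_mul, hprim.pow_eq_one, one_pow]
  have hωne : ω ≠ 0 := by
    intro h
    have := hprim.pow_eq_one
    rw [h, zero_pow (by omega : d ≠ 0)] at this
    exact zero_ne_one this
  have honesub : ∀ j : ℕ, ¬ d ∣ j → (1 - ω ^ j) ≠ 0 := by
    intro j hj
    refine sub_ne_zero.mpr fun h => hj ?_
    exact (hprim.pow_eq_one_iff_dvd j).mp h.symm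
  have hψqint : ψ (qint n) = 0 := by
    rw [hψ, AdjoinRoot.mk_eq_zero]
    exact cyclotomic_dvd_qint ⟨m, hn⟩ (by omega) (by rw [hn]; exact Nat.mul_pos (by omega) (by omega))
  have hψqd : ψ (qint d) = 0 := by
    rw [hψ, AdjoinRoot.mk_eq_zero]
    exact cyclotomic_dvd_qint dvd_rfl (by omega) (by omega)
  set t : ℕ → AdjoinRoot (cyclotomic d ℚ) := fun k =>
    ω ^ (r * (n - k) ^ 2 + (r - 1) * k) * ψ (Gp (n + k) k) ^ (2 * r)
      * ψ (Gp (n - 1) k) ^ (2 * r) with ht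
  -- the one-step relation
  have hstep : ∀ k : ℕ, k + 1 < n → ¬ d ∣ (k + 1) → t (k + 1) * ω = t k := by
    intro k hk hdk
    have hD := congrArg (fun p => (ψ p) ^ (2 * r)) (Dstep (n := n) (k := k) hk)
    simp only [map_mul, map_sub, map_one, map_pow, ← hω0, mul_pow] at hD
    have hu : (1 - ω ^ (n + k + 1)) = 1 - ω ^ (k + 1) := by
      rw [show n + k + 1 = n + (k + 1) by omega, pow_add, hωn, one_mul]
    have hv : (1 - ω ^ (n - k - 1)) * ω ^ (k + 1) = -(1 - ω ^ (k + 1)) := by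
      rw [sub_mul, one_mul, ← pow_add, show n - k - 1 + (k + 1) = n by omega, hωn]
      ring
    -- cancel the (1 - ω^(k+1)) factors
    have hcc : ((1 - ω ^ (k + 1)) * (1 - ω ^ (k + 1))) ^ (2 * r) ≠ 0 :=
      pow_ne_zero _ (mul_ne_zero (honesub _ hdk) (honesub _ hdk))
    have hkey : ψ (Gp (n + k + 1) (k + 1)) ^ (2 * r) * ψ (Gp (n - 1) (k + 1)) ^ (2 * r)
        * ω ^ (2 * r * (k + 1))
        = ψ (Gp (n + k) k) ^ (2 * r) * ψ (Gp (n - 1) k) ^ (2 * r) := by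
      apply mul_right_cancel₀ hcc
      rw [mul_pow]
      calc ψ (Gp (n + k + 1) (k + 1)) ^ (2 * r) * ψ (Gp (n - 1) (k + 1)) ^ (2 * r)
            * ω ^ (2 * r * (k + 1))
            * ((1 - ω ^ (k + 1)) ^ (2 * r) * (1 - ω ^ (k + 1)) ^ (2 * r))
          = ψ (Gp (n + k + 1) (k + 1)) ^ (2 * r) * ψ (Gp (n - 1) (k + 1)) ^ (2 * r)
            * ((1 - ω ^ (k + 1)) ^ (2 * r) * (1 - ω ^ (k + 1)) ^ (2 * r))
            * ω ^ (2 * r * (k + 1)) := by ring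
        _ = ψ (Gp (n + k) k) ^ (2 * r) * ψ (Gp (n - 1) k) ^ (2 * r)
            * ((1 - ω ^ (n + k + 1)) ^ (2 * r) * (1 - ω ^ (n - k - 1)) ^ (2 * r))
            * ω ^ (2 * r * (k + 1)) := by rw [hD]
        _ = ψ (Gp (n + k) k) ^ (2 * r) * ψ (Gp (n - 1) k) ^ (2 * r)
            * ((1 - ω ^ (k + 1)) ^ (2 * r)
               * (((1 - ω ^ (n - k - 1)) * ω ^ (k + 1)) ^ (2 * r))) := by
            rw [hu, mul_pow, show 2 * r * (k + 1) = (k + 1) * (2 * r) by ring, pow_mul]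
            ring
        _ = ψ (Gp (n + k) k) ^ (2 * r) * ψ (Gp (n - 1) k) ^ (2 * r)
            * ((1 - ω ^ (k + 1)) ^ (2 * r) * (1 - ω ^ (k + 1)) ^ (2 * r)) := by
            rw [hv, Even.neg_pow ⟨r, by ring⟩]
    -- now put in the powers of ω
    have hrew : ω ^ (r * (n - (k + 1)) ^ 2 + (r - 1) * (k + 1) + 1) * (ω ^ n) ^ (2 * r)
        = ω ^ (2 * r * (k + 1)) * ω ^ (r * (n - k) ^ 2 + (r - 1) * k) := by
      rw [← pow_mul, ← pow_add, ← pow_add, expid2 (n := n) (r := r) (k := k) (by omega) hr]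
    calc t (k + 1) * ω
        = ψ (Gp (n + k + 1) (k + 1)) ^ (2 * r) * ψ (Gp (n - 1) (k + 1)) ^ (2 * r)
          * ω ^ (r * (n - (k + 1)) ^ 2 + (r - 1) * (k + 1) + 1) := by
          simp only [ht]
          rw [pow_succ, show n + (k + 1) = n + k + 1 by omega]
          ring
      _ = ψ (Gp (n + k + 1) (k + 1)) ^ (2 * r) * ψ (Gp (n - 1) (k + 1)) ^ (2 * r)
          * (ω ^ (r * (n - (k + 1)) ^ 2 + (r - 1) * (k + 1) + 1) * (ω ^ n) ^ (2 * r)) := by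
          rw [hωn, one_pow, mul_one, mul_assoc]
      _ = ψ (Gp (n + k + 1) (k + 1)) ^ (2 * r) * ψ (Gp (n - 1) (k + 1)) ^ (2 * r)
          * (ω ^ (2 * r * (k + 1)) * ω ^ (r * (n - k) ^ 2 + (r - 1) * k)) := by
          rw [hrew]
      _ = (ψ (Gp (n + k + 1) (k + 1)) ^ (2 * r) * ψ (Gp (n - 1) (k + 1)) ^ (2 * r)
          * ω ^ (2 * r * (k + 1))) * ω ^ (r * (n - k) ^ 2 + (r - 1) * k) := by ring
      _ = ψ (Gp (n + k) k) ^ (2 * r) * ψ (Gp (n - 1) k) ^ (2 * r)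
          * ω ^ (r * (n - k) ^ 2 + (r - 1) * k) := by rw [hkey]
      _ = t k := by simp only [ht]; ring
  -- block relation
  have hblock : ∀ j s : ℕ, j < m → s < d → t (d * j + s) * ω ^ s = t (d * j) := by
    intro j s hj
    induction s with
    | zero => intro _; simp
    | succ s ih =>
      intro hs
      have hstep' : t (d * j + s + 1) * ω = t (d * j + s) := by
        apply hstep
        · have : d * j + d ≤ d * m := by
            have : j + 1 ≤ m := by omega
            calc d * j + d = d * (j + 1) := by ring
              _ ≤ d * m := Nat.mul_le_mul_left d this
          omega
        · intro hdvd
          have h1 : d ∣ d * j := ⟨j, rfl⟩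
          have h2 : d ∣ s + 1 := by
            have := (Nat.dvd_sub hdvd h1)
            rwa [show d * j + s + 1 - d * j = s + 1 by omega] at this
          have := Nat.le_of_dvd (by omega) h2
          omega
      calc t (d * j + (s + 1)) * ω ^ (s + 1)
          = (t (d * j + s + 1) * ω) * ω ^ s := by
            rw [pow_succ, show d * j + (s + 1) = d * j + s + 1 by omega]; ring
        _ = t (d * j + s) * ω ^ s := by rw [hstep']
        _ = t (d * j) := ih (by omega)
  -- block sums vanish
  have hblocksum : ∀ j : ℕ, j < m → ∑ s ∈ Finset.range d, t (d * j + s) = 0 := by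
    intro j hj
    have h1 : (∑ s ∈ Finset.range d, t (d * j + s)) * ω ^ (d - 1) = 0 := by
      rw [Finset.sum_mul]
      have hterm : ∀ s ∈ Finset.range d,
          t (d * j + s) * ω ^ (d - 1) = t (d * j) * ω ^ (d - 1 - s) := by
        intro s hs
        have hs' : s < d := Finset.mem_range.mp hs
        rw [show d - 1 = s + (d - 1 - s) by omega, pow_add, ← mul_assoc,
          hblock j s hj hs']
        rw [show s + (d - 1 - s) - s = d - 1 - s by omega]
      rw [Finset.sum_congr rfl hterm, ← Finset.mul_sum]
      rw [Finset.sum_range_reflect (fun i => ω ^ i) d]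
      have : ∑ s ∈ Finset.range d, ω ^ s = ψ (qint d) := by
        rw [qint, map_sum]
        apply Finset.sum_congr rfl
        intro s _
        rw [map_pow, ← hω0]
      rw [this, hψqd, mul_zero]
    rcases mul_eq_zero.mp h1 with h | h
    · exact h
    · exact absurd h (pow_ne_zero _ hωne)
  -- total sum vanishes
  rw [← AdjoinRoot.mk_eq_zero, ← hψ, map_sub, map_mul, map_sum]
  have hterm : ∀ k ∈ Finset.range n,
      ψ (X ^ (r * (n - k) ^ 2 + (r - 1) * k) * Gp (n + k) k ^ (2 * r) * Gp (n - 1) k ^ (2 * r))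
        = t k := by
    intro k _
    rw [map_mul, map_mul, map_pow, map_pow, map_pow, ← hω0, ht]
  rw [Finset.sum_congr rfl hterm, hψqint, mul_zero, sub_zero]
  rw [hn, sum_range_mul_split]
  exact Finset.sum_eq_zero fun j hj => hblocksum j (Finset.mem_range.mp hj)

theorem main_dvd (n r : ℕ) (hn : 1 ≤ n) (hr : 1 ≤ r) :
    qint n * cyclotomic n ℚ ∣
      (∑ k ∈ Finset.range n,
        X ^ (r * (n - k) ^ 2 + (r - 1) * k) * Gp (n + k) k ^ (2 * r) * Gp (n - 1) k ^ (2 * r))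
        - X * qint n := by
  rcases eq_or_lt_of_le hn with h1 | hn2
  · -- n = 1
    subst h1
    rw [Finset.sum_range_one]
    simp only [Nat.add_zero, Nat.sub_self, Gp_zero_right, one_pow, mul_one]
    rw [show r * (1 - 0) ^ 2 + (r - 1) * 0 = r by norm_num]
    have hq1 : qint 1 = 1 := by simp [qint]
    rw [hq1, cyclotomic_one, one_mul, mul_one]
    rw [show (X : Polynomial ℚ) ^ r - X = (X ^ r - 1) - (X - 1) from by ring]
    exact dvd_sub (by simpa using sub_dvd_pow_sub_pow (X : Polynomial ℚ) 1 r) dvd_rfl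
  · -- n ≥ 2
    set T : Polynomial ℚ := (∑ k ∈ Finset.range n,
        X ^ (r * (n - k) ^ 2 + (r - 1) * k) * Gp (n + k) k ^ (2 * r) * Gp (n - 1) k ^ (2 * r))
        - X * qint n with hT
    set g : ℕ → Polynomial ℚ :=
      fun i => if i = n then cyclotomic n ℚ ^ 2 else cyclotomic i ℚ with hg
    have key : ∀ i ∈ n.divisors.erase 1, g i ∣ T := by
      intro i hi
      obtain ⟨hi1, hidvd, -⟩ :
          i ≠ 1 ∧ i ∣ n ∧ n ≠ 0 := by
        simpa [Nat.mem_divisors] using hi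
      have hipos : 0 < i := Nat.pos_of_dvd_of_pos hidvd (by omega)
      by_cases hin : i = n
      · rw [hg]; simp only [if_pos hin, hin]
        exact modPhiSq n r (by omega) hr
      · rw [hg]; simp only [if_neg hin]
        exact modPhiD n r i (n / i) (by omega)
          (Nat.div_pos (Nat.le_of_dvd (by omega) hidvd) hipos)
          (Nat.mul_div_cancel' hidvd).symm hr
    have hpair : (↑(n.divisors.erase 1) : Set ℕ).Pairwise (Function.onFun IsCoprime g) := by
      intro a _ b _ hab
      simp only [Function.onFun, hg]
      by_cases ha : a = n <;> by_cases hb : b = n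
      · exact absurd (ha.trans hb.symm) hab
      · simp only [if_pos ha, if_neg hb, ha]
        exact (cyclotomic.isCoprime_rat (show n ≠ b from fun h => hb h.symm)).pow_left
      · simp only [if_neg ha, if_pos hb, hb]
        exact (cyclotomic.isCoprime_rat (show a ≠ n from ha)).pow_right
      · simp only [if_neg ha, if_neg hb]
        exact cyclotomic.isCoprime_rat hab
    have hprod := Finset.prod_dvd_of_coprime hpair key
    have hmem : n ∈ n.divisors.erase 1 := by
      simp [Nat.mem_divisors]
      omega
    have heq : qint n * cyclotomic n ℚ = ∏ i ∈ n.divisors.erase 1, g i := by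
      rw [qint_eq_prod (by omega)]
      rw [← Finset.mul_prod_erase _ _ hmem, ← Finset.mul_prod_erase _ g hmem]
      have hgn : g n = cyclotomic n ℚ ^ 2 := by rw [hg]; simp
      have hrest : ∏ i ∈ (n.divisors.erase 1).erase n, g i
          = ∏ i ∈ (n.divisors.erase 1).erase n, cyclotomic i ℚ := by
        apply Finset.prod_congr rfl
        intro i hi
        have : i ≠ n := (Finset.mem_erase.mp hi).1
        rw [hg]; simp [this]
      rw [hgn, hrest]
      ring
    rw [heq]
    exact hprod

lemma algebraMap_X_eq_q : algebraMap (Polynomial ℚ) (RatFunc ℚ) X = q := by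
  rw [RatFunc.algebraMap_X]; rfl

lemma qPoch_eq (m : ℕ) : qPoch m = algebraMap (Polynomial ℚ) (RatFunc ℚ) (qfac m) := by
  rw [qPoch, qfac, map_prod]
  apply Finset.prod_congr rfl
  intro i _
  rw [map_sub, map_one, map_pow, algebraMap_X_eq_q]

lemma qPoch_ne_zero (m : ℕ) : qPoch m ≠ 0 := by
  rw [qPoch_eq]
  exact (map_ne_zero_iff _ (RatFunc.algebraMap_injective ℚ)).mpr (qfac_ne_zero m)

lemma qbinom_eq {m k : ℕ} (h : k ≤ m) :
    qbinom m k = algebraMap (Polynomial ℚ) (RatFunc ℚ) (Gp m k) := by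
  rw [qbinom, if_pos h,
    div_eq_iff (mul_ne_zero (qPoch_ne_zero k) (qPoch_ne_zero (m - k)))]
  rw [qPoch_eq, qPoch_eq, qPoch_eq, ← map_mul, ← map_mul]
  exact congrArg _ (Gp_key h).symm

/-- Equations (1.5)–(1.6) combined: for positive integers `n` and `r`,
`∑_{k=0}^{n-1} q^{r(n-k)²+(r-1)k} [n+k choose k]^{2r} [n-1 choose k]^{2r}
  ≡ q[n]  (mod [n] Φ_n(q))`, i.e. the difference is a polynomial multiple of `[n] Φ_n(q)`. -/
theorem sum_even_powers_mod_qint_mul_cyclotomic (n r : ℕ) (hn : 0 < n) (hr : 0 < r) :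
    ∃ f : Polynomial ℚ,
      (∑ k ∈ Finset.range n,
        q ^ ((r : ℤ) * ((n : ℤ) - (k : ℤ)) ^ 2 + ((r : ℤ) - 1) * (k : ℤ)) *
          qbinom (n + k) k ^ (2 * r) * qbinom (n - 1) k ^ (2 * r)) -
        q * qintR n
      = algebraMap (Polynomial ℚ) (RatFunc ℚ)
          (qint n * Polynomial.cyclotomic n ℚ * f) := by
  obtain ⟨f, hf⟩ := main_dvd n r hn hr
  refine ⟨f, ?_⟩
  have hsum : (∑ k ∈ Finset.range n,
        q ^ ((r : ℤ) * ((n : ℤ) - (k : ℤ)) ^ 2 + ((r : ℤ) - 1) * (k : ℤ)) *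
          qbinom (n + k) k ^ (2 * r) * qbinom (n - 1) k ^ (2 * r))
      = algebraMap (Polynomial ℚ) (RatFunc ℚ) (∑ k ∈ Finset.range n,
          X ^ (r * (n - k) ^ 2 + (r - 1) * k) * Gp (n + k) k ^ (2 * r)
            * Gp (n - 1) k ^ (2 * r)) := by
    rw [map_sum]
    apply Finset.sum_congr rfl
    intro k hk
    have hk' : k < n := Finset.mem_range.mp hk
    have hpow : q ^ ((r : ℤ) * ((n : ℤ) - (k : ℤ)) ^ 2 + ((r : ℤ) - 1) * (k : ℤ))
        = algebraMap (Polynomial ℚ) (RatFunc ℚ) (X ^ (r * (n - k) ^ 2 + (r - 1) * k)) := by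
      have he : ((r : ℤ) * ((n : ℤ) - (k : ℤ)) ^ 2 + ((r : ℤ) - 1) * (k : ℤ))
          = ((r * (n - k) ^ 2 + (r - 1) * k : ℕ) : ℤ) := by
        push_cast [Nat.cast_sub (le_of_lt hk'), Nat.cast_sub hr]
        ring
      rw [he, zpow_natCast, map_pow, algebraMap_X_eq_q]
    rw [map_mul, map_mul, map_pow, map_pow, map_pow, hpow,
      qbinom_eq (show k ≤ n + k by omega), qbinom_eq (show k ≤ n - 1 by omega)]
    rw [map_pow]
  have hq2 : q * qintR n = algebraMap (Polynomial ℚ) (RatFunc ℚ) (X * qint n) := by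
    rw [map_mul, qintR, algebraMap_X_eq_q]
  rw [hsum, hq2, ← map_sub, hf]
end
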